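/- arXiv:1111.5658 — 5 statements merged into one kernel-verified Lean document; each statement's English description precedes it below -/
import Mathlib

section
/- Let p(z,w) be a stable polynomial of degree (n,m), and define the reflection p̃(z,w) = z^n w^m conj(p(1/z̄,1/w̄)). Then in L²(dσ/|p|²) on T², p̃ is orthogonal to every monomial z^i w^j with (i,j) not ≥ (n,m), i.e., i<n or j<m. -/
open Complex MeasureTheory Finset
open scoped ComplexInnerProductSpace

noncomputable section

/-- Evaluation of a bivariate polynomial with coefficient array `c i j`,
supported on `0 ≤ i ≤ n`, `0 ≤ j ≤ m`. -/
def evalP (n m : ℕ) (c : ℕ → ℕ → ℂ) (z w : ℂ) : ℂ :=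
  ∑ i ∈ Finset.range (n + 1), ∑ j ∈ Finset.range (m + 1), c i j * z ^ i * w ^ j

/-- `p` is stable: nonvanishing on the closed bidisk. -/
def Stable (n m : ℕ) (c : ℕ → ℕ → ℂ) : Prop :=
  ∀ z w : ℂ, ‖z‖ ≤ 1 → ‖w‖ ≤ 1 → evalP n m c z w ≠ 0

/-- `p` has degree exactly `n` in `z` and `m` in `w`. -/
def DegreeNM (n m : ℕ) (c : ℕ → ℕ → ℂ) : Prop :=
  (∃ j, c n j ≠ 0) ∧ (∃ i, c i m ≠ 0)

/-- Coefficients of the reflected polynomial `p̃(z,w) = zⁿ wᵐ conj (p (1/z̄, 1/w̄))`. -/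
def reflC (n m : ℕ) (c : ℕ → ℕ → ℂ) : ℕ → ℕ → ℂ :=
  fun i j => star (c (n - i) (m - j))

/-- The Laurent monomial `z^i w^j` as a function on the torus, `z = e^{iθ}`, `w = e^{iφ}`. -/
def tmono (i j : ℤ) : ℝ → ℝ → ℂ :=
  fun θ φ => Complex.exp (((i : ℂ) * (θ : ℂ) + (j : ℂ) * (φ : ℂ)) * Complex.I)

/-- A bivariate polynomial as a function on the torus. -/
def onT (n m : ℕ) (c : ℕ → ℕ → ℂ) : ℝ → ℝ → ℂ :=
  fun θ φ => evalP n m c (Complex.exp ((θ : ℂ) * Complex.I)) (Complex.exp ((φ : ℂ) * Complex.I))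

/-- The inner product `⟨f,g⟩ = ∫_{𝕋²} f ḡ dσ/|p|²` of `L²(dσ/|p|²)`. -/
def ip (n m : ℕ) (c : ℕ → ℕ → ℂ) (f g : ℝ → ℝ → ℂ) : ℂ :=
  (1 / (2 * Real.pi) ^ 2 : ℂ) *
    ∫ θ in (0 : ℝ)..(2 * Real.pi), ∫ φ in (0 : ℝ)..(2 * Real.pi),
      f θ φ * star (g θ φ) / ((Complex.normSq (onT n m c θ φ) : ℝ) : ℂ)

/-- Numerator of the Christoffel–Darboux-type kernel `L`:
`zⁿ (p(z,w) conj(p(1/z̄,η)) − p̃(z,w) conj(p̃(1/z̄,η)))`. -/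
def Lnum (n m : ℕ) (c : ℕ → ℕ → ℂ) (z w η : ℂ) : ℂ :=
  z ^ n * (evalP n m c z w * star (evalP n m c (star z)⁻¹ η)
    - evalP n m (reflC n m c) z w * star (evalP n m (reflC n m c) (star z)⁻¹ η))

/-- The kernel built from coefficient arrays `a k` for the polynomials `a_k(z,w)`:
`L(z,w;η) = Σ_{k<m} a_k(z,w) η̄^k`. -/
def Lsum (n m : ℕ) (a : ℕ → ℕ → ℕ → ℂ) (z w η : ℂ) : ℂ :=
  ∑ k ∈ Finset.range m, evalP (2 * n) (m - 1) (a k) z w * (star η) ^ k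

/-- `a` is the coefficient array of the kernel `L` associated with `p`:
`(1 - w η̄) L(z,w;η) = Lnum(z,w;η)` for all `z ≠ 0`. -/
def IsLCoeff (n m : ℕ) (c : ℕ → ℕ → ℂ) (a : ℕ → ℕ → ℕ → ℂ) : Prop :=
  ∀ z w η : ℂ, z ≠ 0 → (1 - w * star η) * Lsum n m a z w η = Lnum n m c z w η

end

/-!
On the torus `z̄ = z⁻¹`, so `p̃ = zⁿ wᵐ p̄` there and the integrand `z^i w^j conj p̃ / |p|²`
is the conjugate of `z^(n-i) w^(m-j) / p(z,w)`. If `i < n`, then for fixed `w` on the circle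
`z ↦ z^(n-i-1) / p(z,w)` is holomorphic on a neighbourhood of the closed disk by stability,
so by Cauchy's theorem `∫ z^(n-i) / p(z,w) dθ = ∮ z^(n-i-1) / p(z,w) dz / I` vanishes; after
Fubini the double integral is zero. The case `j < m` is the same with the variables exchanged.
-/

open Metric
open scoped ComplexConjugate

theorem integral_exp_mul_I_smul_eq_zero {E : Type*} [NormedAddCommGroup E] [NormedSpace ℂ E]
    {f : ℂ → E} (hf : DiffContOnCl ℂ f (ball 0 1)) :
    ∫ θ in (0 : ℝ)..2 * Real.pi, exp (θ * I) • f (exp (θ * I)) = 0 := by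
  have h := hf.circleIntegral_eq_zero zero_le_one
  simp only [circleIntegral, deriv_circleMap, circleMap, ofReal_one, one_mul, zero_add,
    mul_smul, smul_comm _ I, intervalIntegral.integral_smul, smul_eq_zero, I_ne_zero,
    false_or] at h
  exact h

theorem integral_exp_mul_I_zpow_div_eq_zero {g : ℂ → ℂ} (hg : Differentiable ℂ g)
    (hg₀ : ∀ z ∈ closedBall (0 : ℂ) 1, g z ≠ 0) {k : ℤ} (hk : 0 < k) :
    ∫ θ in (0 : ℝ)..2 * Real.pi, exp (θ * I) ^ k / g (exp (θ * I)) = 0 := by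
  obtain ⟨k, rfl⟩ : ∃ l : ℕ, k = l + 1 := ⟨(k - 1).toNat, by omega⟩
  have hf : DiffContOnCl ℂ (fun z => z ^ k / g z) (ball 0 1) := by
    apply DifferentiableOn.diffContOnCl
    rw [closure_ball _ one_ne_zero]
    exact (differentiableOn_pow k).div hg.differentiableOn hg₀
  rw [← integral_exp_mul_I_smul_eq_zero hf]
  refine intervalIntegral.integral_congr fun θ _ => ?_
  simp only [smul_eq_mul, zpow_add_one₀ (exp_ne_zero _), zpow_natCast]
  ring

theorem intervalIntegral_intervalIntegral_swap_of_continuous {E : Type*} [NormedAddCommGroup E]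
    [NormedSpace ℝ E] {F : ℝ → ℝ → E} (hF : Continuous (Function.uncurry F)) (a b c d : ℝ) :
    ∫ x in a..b, ∫ y in c..d, F x y = ∫ y in c..d, ∫ x in a..b, F x y :=
  MeasureTheory.intervalIntegral_intervalIntegral_swap
    ((hF.continuousOn.integrableOn_compact (isCompact_uIcc.prod isCompact_uIcc)).mono_set
      (Set.prod_mono Set.uIoc_subset_uIcc Set.uIoc_subset_uIcc))

theorem tmono_eq (i j : ℤ) (θ φ : ℝ) : tmono i j θ φ = exp (θ * I) ^ i * exp (φ * I) ^ j := by
  rw [tmono, ← exp_int_mul, ← exp_int_mul, ← exp_add]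
  ring_nf

section BivariatePolynomial

variable (n m : ℕ) (c : ℕ → ℕ → ℂ)

theorem differentiable_evalP_left (w : ℂ) : Differentiable ℂ fun z => evalP n m c z w := by
  unfold evalP; fun_prop

theorem differentiable_evalP_right (z : ℂ) : Differentiable ℂ fun w => evalP n m c z w := by
  unfold evalP; fun_prop

@[fun_prop]
theorem Continuous.evalP {X : Type*} [TopologicalSpace X] {f g : X → ℂ} (hf : Continuous f)
    (hg : Continuous g) : Continuous fun x => evalP n m c (f x) (g x) := by
  unfold _root_.evalP; fun_prop

theorem evalP_reflC {z w : ℂ} (hz : z ≠ 0) (hw : w ≠ 0) :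
    evalP n m (reflC n m c) z w = z ^ n * w ^ m * conj (evalP n m c (conj z)⁻¹ (conj w)⁻¹) := by
  simp only [evalP, reflC, map_sum, Finset.mul_sum]
  rw [← Finset.sum_range_reflect]
  refine Finset.sum_congr rfl fun i hi => ?_
  rw [← Finset.sum_range_reflect]
  refine Finset.sum_congr rfl fun j hj => ?_
  have hin : i ≤ n := Nat.lt_succ_iff.mp (Finset.mem_range.mp hi)
  have hjm : j ≤ m := Nat.lt_succ_iff.mp (Finset.mem_range.mp hj)
  simp only [Nat.add_sub_cancel, Nat.sub_sub_self hin, Nat.sub_sub_self hjm, map_mul, map_pow,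
    map_inv₀, conj_conj, inv_pow, Complex.star_def, pow_sub₀ z hz hin, pow_sub₀ w hw hjm]
  ring

theorem evalP_reflC_of_norm_eq_one {z w : ℂ} (hz : ‖z‖ = 1) (hw : ‖w‖ = 1) :
    evalP n m (reflC n m c) z w = z ^ n * w ^ m * conj (evalP n m c z w) := by
  rw [evalP_reflC n m c (ne_zero_of_norm_ne_zero (hz ▸ one_ne_zero))
    (ne_zero_of_norm_ne_zero (hw ▸ one_ne_zero)), ← inv_eq_conj hz, ← inv_eq_conj hw,
    inv_inv, inv_inv]

theorem zpow_mul_zpow_mul_conj_evalP_reflC_div_normSq {z w : ℂ} (hz : ‖z‖ = 1) (hw : ‖w‖ = 1)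
    (hp : evalP n m c z w ≠ 0) (i j : ℤ) :
    z ^ i * w ^ j * conj (evalP n m (reflC n m c) z w) / (normSq (evalP n m c z w) : ℂ) =
      conj (z ^ ((n : ℤ) - i) * w ^ ((m : ℤ) - j) / evalP n m c z w) := by
  have hz₀ : z ≠ 0 := ne_zero_of_norm_ne_zero (hz ▸ one_ne_zero)
  have hw₀ : w ≠ 0 := ne_zero_of_norm_ne_zero (hw ▸ one_ne_zero)
  rw [evalP_reflC_of_norm_eq_one n m c hz hw, ← mul_conj]
  simp only [map_mul, map_div₀, map_zpow₀, map_pow, conj_conj, ← inv_eq_conj hz,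
    ← inv_eq_conj hw, inv_zpow', zpow_sub₀ hz₀, zpow_sub₀ hw₀, zpow_natCast, zpow_neg]
  field_simp

end BivariatePolynomial

theorem integral_integral_zpow_mul_zpow_div_evalP_eq_zero {n m : ℕ} {c : ℕ → ℕ → ℂ}
    (hstable : Stable n m c) {k l : ℤ} (hkl : 0 < k ∨ 0 < l) :
    ∫ θ in (0 : ℝ)..2 * Real.pi, ∫ φ in (0 : ℝ)..2 * Real.pi,
      exp (θ * I) ^ k * exp (φ * I) ^ l / evalP n m c (exp (θ * I)) (exp (φ * I)) = 0 := by
  have hcircle (θ : ℝ) : ‖exp (θ * I)‖ ≤ 1 := (norm_exp_ofReal_mul_I θ).le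
  rcases hkl with hk | hl
  · rw [intervalIntegral_intervalIntegral_swap_of_continuous (by
      rw [Function.uncurry_def]
      exact Continuous.div (by fun_prop (disch := simp [exp_ne_zero])) (by fun_prop)
        fun q => hstable _ _ (hcircle q.1) (hcircle q.2))]
    have hinner (φ : ℝ) : ∫ θ in (0 : ℝ)..2 * Real.pi,
        exp (θ * I) ^ k * exp (φ * I) ^ l / evalP n m c (exp (θ * I)) (exp (φ * I)) = 0 := by
      simp_rw [mul_div_right_comm _ (exp (φ * I) ^ l), intervalIntegral.integral_mul_const]
      rw [integral_exp_mul_I_zpow_div_eq_zero (differentiable_evalP_left n m c _)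
        (fun z hz => hstable _ _ (mem_closedBall_zero_iff.mp hz) (hcircle φ)) hk, zero_mul]
    simp only [hinner, intervalIntegral.integral_zero]
  · have hinner (θ : ℝ) : ∫ φ in (0 : ℝ)..2 * Real.pi,
        exp (θ * I) ^ k * exp (φ * I) ^ l / evalP n m c (exp (θ * I)) (exp (φ * I)) = 0 := by
      simp_rw [mul_div_assoc, intervalIntegral.integral_const_mul]
      rw [integral_exp_mul_I_zpow_div_eq_zero (differentiable_evalP_right n m c _)
        (fun w hw => hstable _ _ (hcircle θ) (mem_closedBall_zero_iff.mp hw)) hl, mul_zero]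
    simp only [hinner, intervalIntegral.integral_zero]

theorem statement1_general (n m : ℕ) (c : ℕ → ℕ → ℂ)
    (hstable : Stable n m c)
    (i j : ℤ) (hij : i < (n : ℤ) ∨ j < (m : ℤ)) :
    ip n m c (tmono i j) (onT n m (reflC n m c)) = 0 := by
  have hintegrand (θ φ : ℝ) :
      tmono i j θ φ * star (onT n m (reflC n m c) θ φ) / (normSq (onT n m c θ φ) : ℂ) =
        conj (exp (θ * I) ^ ((n : ℤ) - i) * exp (φ * I) ^ ((m : ℤ) - j) /
          evalP n m c (exp (θ * I)) (exp (φ * I))) := by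
    have hθ := norm_exp_ofReal_mul_I θ
    have hφ := norm_exp_ofReal_mul_I φ
    rw [tmono_eq, onT, onT, Complex.star_def]
    exact zpow_mul_zpow_mul_conj_evalP_reflC_div_normSq n m c hθ hφ
      (hstable _ _ hθ.le hφ.le) i j
  have hvanish := integral_integral_zpow_mul_zpow_div_evalP_eq_zero hstable
    (k := (n : ℤ) - i) (l := (m : ℤ) - j) (by omega)
  simp only [ip, hintegrand, intervalIntegral.intervalIntegral_conj, hvanish, map_zero, mul_zero]

/-- In L²(dσ/|p|²), the reflection p̃ is orthogonal to every
monomial z^i w^j with (i,j) ≱ (n,m), i.e. i < n or j < m. -/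
theorem statement1 (n m : ℕ) (c : ℕ → ℕ → ℂ)
    (hstable : Stable n m c) (hdeg : DegreeNM n m c)
    (i j : ℤ) (hij : i < (n : ℤ) ∨ j < (m : ℤ)) :
    ip n m c (tmono i j) (onT n m (reflC n m c)) = 0 :=
  statement1_general n m c hstable i j hij
end

section
/- Let p be a stable polynomial of degree (n,m) and define L(z,w;η) = z^n [p(z,w)·conj(p(1/z̄,η)) − p̃(z,w)·conj(p̃(1/z̄,η))]/(1 − w·η̄). Then L is a polynomial of degree at most (2n, m−1) in (z,w) and a polynomial of degree at most m−1 in η̄. -/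
open Complex MeasureTheory Finset
open scoped ComplexInnerProductSpace

noncomputable section
namespace Statement3Aux

def G (n m : ℕ) (c : ℕ → ℕ → ℂ) (i₁ i₂ j k : ℕ) : ℂ :=
  c i₁ j * star (c i₂ k) - star (c i₂ (m - j)) * c i₁ (m - k)

def KA (n m : ℕ) (c : ℕ → ℕ → ℂ) (i j k : ℕ) : ℂ :=
  ∑ i₁ ∈ range (n+1), ∑ i₂ ∈ range (n+1),
    if n + i₁ = i + i₂ then c i₁ j * star (c i₂ k) else 0

def KB (n m : ℕ) (c : ℕ → ℕ → ℂ) (i j k : ℕ) : ℂ :=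
  ∑ i₁ ∈ range (n+1), ∑ i₂ ∈ range (n+1),
    if n + i₁ = i + i₂ then star (c i₂ (m - j)) * c i₁ (m - k) else 0

def Fc (n m : ℕ) (c : ℕ → ℕ → ℂ) (i j k : ℕ) : ℂ :=
  if j ≤ m ∧ k ≤ m then KA n m c i j k - KB n m c i j k else 0

def Bb (n m : ℕ) (c : ℕ → ℕ → ℂ) (i j k : ℕ) : ℂ :=
  if j < m ∧ k < m then -∑ t ∈ range m, Fc n m c i (j+1+t) (k+1+t) else 0

variable {n m : ℕ} {c : ℕ → ℕ → ℂ}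

lemma Fc_zero {i j k : ℕ} (h : m < j ∨ m < k) : Fc n m c i j k = 0 := by
  unfold Fc; rw [if_neg (by omega)]

lemma key1 (i k : ℕ) : ∑ t ∈ range (m+1), Fc n m c i t (k+t) = 0 := by
  have step : ∀ t ∈ range (m+1), Fc n m c i t (k+t)
      = (if k + t ≤ m then KA n m c i t (k+t) else 0)
        - (if k + t ≤ m then KB n m c i t (k+t) else 0) := by
    intro t ht; rw [mem_range] at ht
    by_cases h2 : k + t ≤ m
    · unfold Fc; rw [if_pos ⟨by omega, h2⟩, if_pos h2, if_pos h2]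
    · unfold Fc; rw [if_neg (by omega), if_neg h2, if_neg h2]; ring
  rw [sum_congr rfl step, sum_sub_distrib, sub_eq_zero, ← Finset.sum_filter, ← Finset.sum_filter]
  refine Finset.sum_nbij' (fun t => m - k - t) (fun t => m - k - t) ?_ ?_ ?_ ?_ ?_ <;>
    intro a ha <;> simp only [mem_filter, mem_range] at ha ⊢
  · omega
  · omega
  · omega
  · omega
  · -- KA i a (k+a) = KB i (m-k-a) (k+(m-k-a))
    have e : k + (m - k - a) = m - a := by omega
    rw [e]
    unfold KA KB
    refine sum_congr rfl fun i₁ _ => sum_congr rfl fun i₂ _ => ?_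
    have e1 : m - (m - k - a) = k + a := by omega
    have e2 : m - (m - a) = a := by omega
    rw [e1, e2]
    split_ifs <;> ring

lemma key2 (i j : ℕ) : ∑ t ∈ range (m+1), Fc n m c i (j+t) t = 0 := by
  have step : ∀ t ∈ range (m+1), Fc n m c i (j+t) t
      = (if j + t ≤ m then KA n m c i (j+t) t else 0)
        - (if j + t ≤ m then KB n m c i (j+t) t else 0) := by
    intro t ht; rw [mem_range] at ht
    by_cases h2 : j + t ≤ m
    · unfold Fc; rw [if_pos ⟨h2, by omega⟩, if_pos h2, if_pos h2]
    · unfold Fc; rw [if_neg (by omega), if_neg h2, if_neg h2]; ring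
  rw [sum_congr rfl step, sum_sub_distrib, sub_eq_zero, ← Finset.sum_filter, ← Finset.sum_filter]
  refine Finset.sum_nbij' (fun t => m - j - t) (fun t => m - j - t) ?_ ?_ ?_ ?_ ?_ <;>
    intro a ha <;> simp only [mem_filter, mem_range] at ha ⊢
  · omega
  · omega
  · omega
  · omega
  · -- KA i (j+a) a = KB i (j+(m-j-a)) (m-j-a)
    have e : j + (m - j - a) = m - a := by omega
    rw [e]
    unfold KA KB
    refine sum_congr rfl fun i₁ _ => sum_congr rfl fun i₂ _ => ?_
    have e1 : m - (m - a) = a := by omega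
    have e2 : m - (m - j - a) = j + a := by omega
    rw [e1, e2]
    split_ifs <;> ring

lemma coeff_rel (i j k : ℕ) (hj : j ≤ m) (hk : k ≤ m) :
    Fc n m c i j k = Bb n m c i j k
      - (if 1 ≤ j ∧ 1 ≤ k then Bb n m c i (j-1) (k-1) else 0) := by
  by_cases hj0 : j = 0
  · subst hj0
    rw [if_neg (by omega), sub_zero]
    by_cases hkm : k < m
    · unfold Bb
      rw [if_pos ⟨by omega, hkm⟩]
      have h0 := key1 (n := n) (m := m) (c := c) i k
      rw [Finset.sum_range_succ'] at h0
      have e : ∀ t ∈ range m, Fc n m c i (t+1) (k+(t+1)) = Fc n m c i (0+1+t) (k+1+t) := by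
        intro t _; congr 1 <;> omega
      rw [sum_congr rfl e] at h0
      have : Fc n m c i 0 (k + 0) = Fc n m c i 0 k := by norm_num
      rw [this] at h0
      linear_combination h0
    · have hkm' : k = m := by omega
      rw [hkm']
      unfold Bb
      rw [if_neg (by omega)]
      have h0 := key1 (n := n) (m := m) (c := c) i m
      rw [Finset.sum_range_succ'] at h0
      have e : ∀ t ∈ range m, Fc n m c i (t+1) (m+(t+1)) = 0 := by
        intro t _; exact Fc_zero (Or.inr (by omega))
      rw [sum_congr rfl e] at h0
      simpa using h0
  · by_cases hk0 : k = 0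
    · subst hk0
      rw [if_neg (by omega), sub_zero]
      by_cases hjm : j < m
      · unfold Bb
        rw [if_pos ⟨hjm, by omega⟩]
        have h0 := key2 (n := n) (m := m) (c := c) i j
        rw [Finset.sum_range_succ'] at h0
        have e : ∀ t ∈ range m, Fc n m c i (j+(t+1)) (t+1) = Fc n m c i (j+1+t) (0+1+t) := by
          intro t _; congr 1 <;> omega
        rw [sum_congr rfl e] at h0
        have : Fc n m c i (j + 0) 0 = Fc n m c i j 0 := by norm_num
        rw [this] at h0
        linear_combination h0
      · have hjm' : j = m := by omega
        rw [hjm']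
        unfold Bb
        rw [if_neg (by omega)]
        have h0 := key2 (n := n) (m := m) (c := c) i m
        rw [Finset.sum_range_succ'] at h0
        have e : ∀ t ∈ range m, Fc n m c i (m+(t+1)) (t+1) = 0 := by
          intro t _; exact Fc_zero (Or.inl (by omega))
        rw [sum_congr rfl e] at h0
        simpa using h0
    · -- j ≥ 1, k ≥ 1
      have hm1 : 1 ≤ m := by omega
      rw [if_pos ⟨by omega, by omega⟩]
      have hB2 : Bb n m c i (j-1) (k-1) = -∑ t ∈ range m, Fc n m c i (j+t) (k+t) := by
        unfold Bb
        rw [if_pos ⟨by omega, by omega⟩]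
        congr 1
        refine sum_congr rfl fun t _ => ?_
        congr 1 <;> omega
      by_cases hjk : j < m ∧ k < m
      · have hB1 : Bb n m c i j k = -∑ t ∈ range m, Fc n m c i (j+1+t) (k+1+t) := by
          unfold Bb; rw [if_pos hjk]
        rw [hB1, hB2]
        have hA := Finset.sum_range_succ' (fun t => Fc n m c i (j+t) (k+t)) m
        have hBsum := Finset.sum_range_succ (fun t => Fc n m c i (j+t) (k+t)) m
        have hgm : Fc n m c i (j+m) (k+m) = 0 := Fc_zero (Or.inl (by omega))
        have e : ∀ t ∈ range m, Fc n m c i (j+(t+1)) (k+(t+1)) = Fc n m c i (j+1+t) (k+1+t) := by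
          intro t _; congr 1 <;> omega
        rw [sum_congr rfl e] at hA
        simp only [add_zero, hgm] at hA hBsum
        -- hA : ∑ range (m+1) g = ∑ range m Fc(j+1+t)(k+1+t) + Fc i j k
        -- hBsum : ∑ range (m+1) g = ∑ range m g t + 0
        linear_combination hBsum - hA
      · have hB1 : Bb n m c i j k = 0 := by unfold Bb; rw [if_neg hjk]
        rw [hB1, hB2]
        -- goal : Fc i j k = 0 - -∑ range m Fc (j+t)(k+t)
        have : ∑ t ∈ range m, Fc n m c i (j+t) (k+t) = Fc n m c i j k := by
          rw [Finset.sum_eq_single 0]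
          · norm_num
          · intro t _ ht
            refine Fc_zero ?_
            rcases not_and_or.mp hjk with h | h
            · exact Or.inl (by omega)
            · exact Or.inr (by omega)
          · intro h; exact absurd (mem_range.mpr (by omega)) h
        rw [this]; ring

lemma powc (z : ℂ) (hz : z ≠ 0) (a b : ℕ) (h : b ≤ a) : z^a * (z⁻¹)^b = z^(a-b) := by
  rw [inv_pow]; exact (pow_sub₀ z hz h).symm

lemma collapse (n i₁ i₂ : ℕ) (h1 : i₁ ≤ n) (h2 : i₂ ≤ n) (X : ℕ → ℂ) :
    (∑ i ∈ range (2*n+1), if n + i₁ = i + i₂ then X i else 0) = X (n + i₁ - i₂) := by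
  rw [Finset.sum_eq_single (n + i₁ - i₂)]
  · rw [if_pos (by omega)]
  · intro b _ hb; rw [if_neg (by omega)]
  · intro h; exact absurd (mem_range.mpr (by omega)) h


section Expansion

lemma expand1 (n m : ℕ) (c : ℕ → ℕ → ℂ) (z w η : ℂ) (hz : z ≠ 0) :
    z^n * (evalP n m c z w * star (evalP n m c (star z)⁻¹ η))
      = ∑ i₁ ∈ range (n+1), ∑ i₂ ∈ range (n+1), ∑ j ∈ range (m+1), ∑ k ∈ range (m+1),
          (c i₁ j * star (c i₂ k)) * z^(n+i₁-i₂) * w^j * (star η)^k := by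
  have hstar : star (evalP n m c (star z)⁻¹ η)
      = ∑ i₂ ∈ range (n+1), ∑ k ∈ range (m+1), star (c i₂ k) * (z⁻¹)^i₂ * (star η)^k := by
    unfold evalP
    rw [star_sum]
    refine sum_congr rfl fun i₂ _ => ?_
    rw [star_sum]
    refine sum_congr rfl fun k _ => ?_
    simp [star_mul', star_pow]
  rw [hstar]
  unfold evalP
  rw [Finset.sum_mul_sum]
  simp only [Finset.mul_sum, Finset.sum_mul]
  refine sum_congr rfl fun i₁ h₁ => sum_congr rfl fun i₂ h₂ => ?_
  rw [Finset.sum_comm]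
  refine sum_congr rfl fun j _ => sum_congr rfl fun k _ => ?_
  rw [mem_range] at h₁ h₂
  rw [← powc z hz (n+i₁) i₂ (by omega), pow_add]
  ring

lemma expand2 (n m : ℕ) (c : ℕ → ℕ → ℂ) (z w η : ℂ) (hz : z ≠ 0) :
    z^n * (evalP n m (reflC n m c) z w * star (evalP n m (reflC n m c) (star z)⁻¹ η))
      = ∑ i₁ ∈ range (n+1), ∑ i₂ ∈ range (n+1), ∑ j ∈ range (m+1), ∑ k ∈ range (m+1),
          (star (c i₂ (m-j)) * c i₁ (m-k)) * z^(n+i₁-i₂) * w^j * (star η)^k := by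
  have hC : evalP n m (reflC n m c) z w
      = ∑ i₁ ∈ range (n+1), ∑ j ∈ range (m+1), star (c i₁ (m-j)) * z^(n-i₁) * w^j := by
    rw [← Finset.sum_range_reflect]
    unfold evalP reflC
    refine sum_congr rfl fun a ha => ?_
    rw [mem_range] at ha
    refine sum_congr rfl fun j _ => ?_
    have e1 : n + 1 - 1 - a = n - a := by omega
    have e2 : n - (n - a) = a := by omega
    rw [e1, e2]
  have hD : star (evalP n m (reflC n m c) (star z)⁻¹ η)
      = ∑ i₂ ∈ range (n+1), ∑ k ∈ range (m+1), c i₂ (m-k) * (z⁻¹)^(n-i₂) * (star η)^k := by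
    have h1 : star (evalP n m (reflC n m c) (star z)⁻¹ η)
        = ∑ i₂ ∈ range (n+1), ∑ k ∈ range (m+1), c (n-i₂) (m-k) * (z⁻¹)^i₂ * (star η)^k := by
      unfold evalP reflC
      rw [star_sum]
      refine sum_congr rfl fun i₂ _ => ?_
      rw [star_sum]
      refine sum_congr rfl fun k _ => ?_
      simp [star_mul', star_pow]
    rw [h1, ← Finset.sum_range_reflect]
    refine sum_congr rfl fun a ha => ?_
    rw [mem_range] at ha
    refine sum_congr rfl fun k _ => ?_
    have e1 : n + 1 - 1 - a = n - a := by omega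
    have e2 : n - (n - a) = a := by omega
    rw [e1, e2]
  rw [hC, hD, Finset.sum_mul_sum]
  simp only [Finset.mul_sum, Finset.sum_mul]
  rw [Finset.sum_comm]
  refine sum_congr rfl fun i₁ h₁ => sum_congr rfl fun i₂ h₂ => ?_
  rw [Finset.sum_comm]
  refine sum_congr rfl fun j _ => sum_congr rfl fun k _ => ?_
  rw [mem_range] at h₁ h₂
  have e : n + i₁ - i₂ = n + (n - i₂) - (n - i₁) := by omega
  rw [e, ← powc z hz (n + (n - i₂)) (n - i₁) (by omega), pow_add]
  ring

lemma E_eq_NF (n m : ℕ) (c : ℕ → ℕ → ℂ) (z w s : ℂ) :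
    (∑ i ∈ range (2*n+1), ∑ j ∈ range (m+1), ∑ k ∈ range (m+1),
        Fc n m c i j k * z^i * w^j * s^k)
      = ∑ i₁ ∈ range (n+1), ∑ i₂ ∈ range (n+1), ∑ j ∈ range (m+1), ∑ k ∈ range (m+1),
          G n m c i₁ i₂ j k * z^(n+i₁-i₂) * w^j * s^k := by
  have h1 : ∀ i, ∀ j ∈ range (m+1), ∀ k ∈ range (m+1),
      Fc n m c i j k * z^i * w^j * s^k
        = ∑ i₁ ∈ range (n+1), ∑ i₂ ∈ range (n+1),
            (if n + i₁ = i + i₂ then G n m c i₁ i₂ j k * z^i * w^j * s^k else 0) := by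
    intro i j hj k hk
    rw [mem_range] at hj hk
    unfold Fc KA KB G
    rw [if_pos ⟨by omega, by omega⟩, ← sum_sub_distrib]
    rw [Finset.sum_mul, Finset.sum_mul, Finset.sum_mul]
    refine sum_congr rfl fun i₁ _ => ?_
    rw [← sum_sub_distrib, Finset.sum_mul, Finset.sum_mul, Finset.sum_mul]
    refine sum_congr rfl fun i₂ _ => ?_
    split_ifs <;> ring
  calc
    _ = ∑ i ∈ range (2*n+1), ∑ j ∈ range (m+1), ∑ k ∈ range (m+1),
          ∑ i₁ ∈ range (n+1), ∑ i₂ ∈ range (n+1),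
            (if n + i₁ = i + i₂ then G n m c i₁ i₂ j k * z^i * w^j * s^k else 0) :=
        sum_congr rfl fun i _ => sum_congr rfl fun j hj => sum_congr rfl fun k hk =>
          h1 i j hj k hk
    _ = ∑ j ∈ range (m+1), ∑ i ∈ range (2*n+1), ∑ k ∈ range (m+1),
          ∑ i₁ ∈ range (n+1), ∑ i₂ ∈ range (n+1),
            (if n + i₁ = i + i₂ then G n m c i₁ i₂ j k * z^i * w^j * s^k else 0) :=
        Finset.sum_comm
    _ = ∑ j ∈ range (m+1), ∑ k ∈ range (m+1), ∑ i ∈ range (2*n+1),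
          ∑ i₁ ∈ range (n+1), ∑ i₂ ∈ range (n+1),
            (if n + i₁ = i + i₂ then G n m c i₁ i₂ j k * z^i * w^j * s^k else 0) :=
        sum_congr rfl fun j _ => Finset.sum_comm
    _ = ∑ j ∈ range (m+1), ∑ k ∈ range (m+1), ∑ i₁ ∈ range (n+1), ∑ i ∈ range (2*n+1),
          ∑ i₂ ∈ range (n+1),
            (if n + i₁ = i + i₂ then G n m c i₁ i₂ j k * z^i * w^j * s^k else 0) :=
        sum_congr rfl fun j _ => sum_congr rfl fun k _ => Finset.sum_comm
    _ = ∑ j ∈ range (m+1), ∑ k ∈ range (m+1), ∑ i₁ ∈ range (n+1), ∑ i₂ ∈ range (n+1),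
          ∑ i ∈ range (2*n+1),
            (if n + i₁ = i + i₂ then G n m c i₁ i₂ j k * z^i * w^j * s^k else 0) :=
        sum_congr rfl fun j _ => sum_congr rfl fun k _ => sum_congr rfl fun i₁ _ =>
          Finset.sum_comm
    _ = ∑ j ∈ range (m+1), ∑ k ∈ range (m+1), ∑ i₁ ∈ range (n+1), ∑ i₂ ∈ range (n+1),
          G n m c i₁ i₂ j k * z^(n+i₁-i₂) * w^j * s^k := by
        refine sum_congr rfl fun j _ => sum_congr rfl fun k _ => sum_congr rfl fun i₁ h₁ =>
          sum_congr rfl fun i₂ h₂ => ?_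
        rw [mem_range] at h₁ h₂
        exact collapse n i₁ i₂ (by omega) (by omega)
          (fun i => G n m c i₁ i₂ j k * z^i * w^j * s^k)
    _ = ∑ j ∈ range (m+1), ∑ i₁ ∈ range (n+1), ∑ k ∈ range (m+1), ∑ i₂ ∈ range (n+1),
          G n m c i₁ i₂ j k * z^(n+i₁-i₂) * w^j * s^k :=
        sum_congr rfl fun j _ => Finset.sum_comm
    _ = ∑ j ∈ range (m+1), ∑ i₁ ∈ range (n+1), ∑ i₂ ∈ range (n+1), ∑ k ∈ range (m+1),
          G n m c i₁ i₂ j k * z^(n+i₁-i₂) * w^j * s^k :=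
        sum_congr rfl fun j _ => sum_congr rfl fun i₁ _ => Finset.sum_comm
    _ = ∑ i₁ ∈ range (n+1), ∑ j ∈ range (m+1), ∑ i₂ ∈ range (n+1), ∑ k ∈ range (m+1),
          G n m c i₁ i₂ j k * z^(n+i₁-i₂) * w^j * s^k :=
        Finset.sum_comm
    _ = _ := sum_congr rfl fun i₁ _ => Finset.sum_comm

lemma Lnum_expand (n m : ℕ) (c : ℕ → ℕ → ℂ) (z w η : ℂ) (hz : z ≠ 0) :
    Lnum n m c z w η = ∑ i ∈ range (2*n+1), ∑ j ∈ range (m+1), ∑ k ∈ range (m+1),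
      Fc n m c i j k * z^i * w^j * (star η)^k := by
  rw [E_eq_NF n m c z w (star η)]
  unfold Lnum
  rw [mul_sub, expand1 n m c z w η hz, expand2 n m c z w η hz, ← sum_sub_distrib]
  refine sum_congr rfl fun i₁ _ => ?_
  rw [← sum_sub_distrib]
  refine sum_congr rfl fun i₂ _ => ?_
  rw [← sum_sub_distrib]
  refine sum_congr rfl fun j _ => ?_
  rw [← sum_sub_distrib]
  refine sum_congr rfl fun k _ => ?_
  unfold G
  ring

lemma mulT (n m : ℕ) (c : ℕ → ℕ → ℂ) (z w s : ℂ) :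
    (1 - w * s) * (∑ i ∈ range (2*n+1), ∑ j ∈ range m, ∑ k ∈ range m,
        Bb n m c i j k * z^i * w^j * s^k)
      = ∑ i ∈ range (2*n+1), ∑ j ∈ range (m+1), ∑ k ∈ range (m+1),
          Fc n m c i j k * z^i * w^j * s^k := by
  have hBm1 : ∀ i k, Bb n m c i m k = 0 := by
    intro i k; unfold Bb; rw [if_neg (by omega)]
  have hBm2 : ∀ i j, Bb n m c i j m = 0 := by
    intro i j; unfold Bb; rw [if_neg (by omega)]
  have hext : ∀ i, (∑ j ∈ range m, ∑ k ∈ range m, Bb n m c i j k * z^i * w^j * s^k)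
      = ∑ j ∈ range (m+1), ∑ k ∈ range (m+1), Bb n m c i j k * z^i * w^j * s^k := by
    intro i
    rw [Finset.sum_range_succ]
    simp only [hBm1, zero_mul, Finset.sum_const_zero, add_zero]
    refine sum_congr rfl fun j _ => ?_
    rw [Finset.sum_range_succ]
    simp only [hBm2, zero_mul, add_zero]
  rw [sum_congr rfl (fun i _ => hext i), Finset.mul_sum]
  refine sum_congr rfl fun i _ => ?_
  have h2 : ∀ j ∈ range (m+1), ∀ k ∈ range (m+1),
      Fc n m c i j k * z^i * w^j * s^k
        = Bb n m c i j k * z^i * w^j * s^k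
          - (if 1 ≤ j ∧ 1 ≤ k then Bb n m c i (j-1) (k-1) else 0) * z^i * w^j * s^k := by
    intro j hj k hk
    rw [mem_range] at hj hk
    rw [coeff_rel i j k (by omega) (by omega)]
    ring
  rw [sum_congr rfl fun j hj => sum_congr rfl fun k hk => h2 j hj k hk]
  simp only [sum_sub_distrib]
  rw [sub_mul, one_mul]
  congr 1
  -- goal : w * s * ∑∑ Bb ... = ∑∑ (ite shifted) ...
  have hR : (∑ j ∈ range (m+1), ∑ k ∈ range (m+1),
        (if 1 ≤ j ∧ 1 ≤ k then Bb n m c i (j-1) (k-1) else 0) * z^i * w^j * s^k)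
      = ∑ j ∈ range m, ∑ k ∈ range m, Bb n m c i j k * z^i * w^(j+1) * s^(k+1) := by
    rw [Finset.sum_range_succ']
    have e0 : (∑ k ∈ range (m+1),
        (if 1 ≤ (0:ℕ) ∧ 1 ≤ k then Bb n m c i (0-1) (k-1) else 0) * z^i * w^(0:ℕ) * s^k) = 0 := by
      refine Finset.sum_eq_zero fun k _ => ?_
      rw [if_neg (by omega), zero_mul, zero_mul, zero_mul]
    rw [e0, add_zero]
    refine sum_congr rfl fun j _ => ?_
    rw [Finset.sum_range_succ']
    have e2 : (if 1 ≤ j+1 ∧ 1 ≤ (0:ℕ) then Bb n m c i (j+1-1) (0-1) else 0)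
        * z^i * w^(j+1) * s^(0:ℕ) = 0 := by
      rw [if_neg (by omega), zero_mul, zero_mul, zero_mul]
    rw [e2, add_zero]
    refine sum_congr rfl fun k _ => ?_
    rw [if_pos ⟨by omega, by omega⟩]
    norm_num
  rw [hR]
  have hdrop : (∑ j ∈ range (m+1), ∑ k ∈ range (m+1), Bb n m c i j k * z^i * w^j * s^k)
      = ∑ j ∈ range m, ∑ k ∈ range m, Bb n m c i j k * z^i * w^j * s^k := by
    rw [Finset.sum_range_succ]
    simp only [hBm1, zero_mul, Finset.sum_const_zero, add_zero]
    refine sum_congr rfl fun j _ => ?_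
    rw [Finset.sum_range_succ]
    simp only [hBm2, zero_mul, add_zero]
  rw [hdrop, Finset.mul_sum]
  refine sum_congr rfl fun j _ => ?_
  rw [Finset.mul_sum]
  refine sum_congr rfl fun k _ => ?_
  rw [pow_succ, pow_succ]
  ring

end Expansion

end Statement3Aux
end

/-- The kernel L (defined by (1 - wη̄) L(z,w;η) = numerator) is a
polynomial of degree at most (2n, m-1) in (z,w) and at most m-1 in η̄. -/
theorem statement3 (n m : ℕ) (c : ℕ → ℕ → ℂ)
    (hstable : Stable n m c) (hdeg : DegreeNM n m c)
    (L : ℂ → ℂ → ℂ → ℂ)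
    (hL : ∀ z w η : ℂ, z ≠ 0 → (1 - w * star η) * L z w η = Lnum n m c z w η) :
    ∃ b : ℕ → ℕ → ℕ → ℂ, ∀ z w η : ℂ, z ≠ 0 → w * star η ≠ 1 →
      L z w η = ∑ i ∈ Finset.range (2 * n + 1), ∑ j ∈ Finset.range m,
        ∑ k ∈ Finset.range m, b i j k * z ^ i * w ^ j * (star η) ^ k := by
  refine ⟨Statement3Aux.Bb n m c, fun z w η hz hwη => ?_⟩
  have hne : (1 : ℂ) - w * star η ≠ 0 := sub_ne_zero.mpr (Ne.symm hwη)
  apply mul_left_cancel₀ hne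
  rw [hL z w η hz]
  exact (Statement3Aux.Lnum_expand n m c z w η hz).trans
    (Statement3Aux.mulT n m c z w (star η)).symm
end

section
/- The kernel L associated with a stable polynomial p of degree (n,m) admits the decomposition L(z,w;η) = p(z,w)·A(z,w;η) + p̃(z,w)·B(z,w;η), where A(z,w;η) = η̄^m [p̃(z,1/η̄) − p̃(z,w)]/(1 − wη̄) and B(z,w;η) = η̄^m [p(z,w) − p(z,1/η̄)]/(1 − wη̄) are polynomials of degree at most (n, m−1) in (z,w) and m−1 in η̄. -/
open Complex MeasureTheory Finset
open scoped ComplexInnerProductSpace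

/-- A(z,w;η) = η̄^m [p̃(z,1/η̄) − p̃(z,w)]/(1 − wη̄). -/
noncomputable def Afun (n m : ℕ) (c : ℕ → ℕ → ℂ) (z w η : ℂ) : ℂ :=
  (star η) ^ m *
    (evalP n m (reflC n m c) z ((star η)⁻¹) - evalP n m (reflC n m c) z w) /
      (1 - w * star η)

/-- B(z,w;η) = η̄^m [p(z,w) − p(z,1/η̄)]/(1 − wη̄). -/
noncomputable def Bfun (n m : ℕ) (c : ℕ → ℕ → ℂ) (z w η : ℂ) : ℂ :=
  (star η) ^ m *
    (evalP n m c z w - evalP n m c z ((star η)⁻¹)) /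
      (1 - w * star η)

/-
Divisibility: for `j ≤ m`, `x ^ m * (x⁻¹ ^ j - w ^ j) = x ^ (m - j) * (1 - (w * x) ^ j)`, and the
geometric sum divides this by `1 - w * x` with quotient `∑_{l < j} w ^ l * x ^ (m - j + l)`, whose
exponents of `w` and `x` are below `m`; so `A` and `B` are polynomials of the stated degrees.
Decomposition: `zⁿ conj (p (1/z̄, η)) = η̄ᵐ p̃ (z, 1/η̄)`, and the same holds with `p` and `p̃`
exchanged since `p̃̃ = p`. Hence `(1 - w η̄) L = η̄ᵐ (p p̃(z, 1/η̄) - p̃ p(z, 1/η̄))`, which is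
`(1 - w η̄) (p A + p̃ B)` because the cross terms `η̄ᵐ p p̃` cancel.
-/

theorem exists_coeff_eq_sum_monomials {ι : Type*} (s : Finset ι) (f : ι → ℂ)
    (e : ι → ℕ × ℕ × ℕ) {N₁ N₂ N₃ : ℕ} (he : ∀ t ∈ s, e t ∈ range N₁ ×ˢ range N₂ ×ˢ range N₃) :
    ∃ α : ℕ → ℕ → ℕ → ℂ, ∀ z w y : ℂ,
      ∑ t ∈ s, f t * z ^ (e t).1 * w ^ (e t).2.1 * y ^ (e t).2.2 =
        ∑ i ∈ range N₁, ∑ j ∈ range N₂, ∑ k ∈ range N₃, α i j k * z ^ i * w ^ j * y ^ k := by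
  refine ⟨fun i j k => ∑ t ∈ s with e t = (i, j, k), f t, fun z w y => ?_⟩
  rw [← sum_fiberwise_of_maps_to he, sum_product, sum_congr rfl fun i _ => sum_product _ _ _]
  refine sum_congr rfl fun i _ => sum_congr rfl fun j _ => sum_congr rfl fun k _ => ?_
  rw [sum_mul, sum_mul, sum_mul]
  refine sum_congr rfl fun t ht => ?_
  rw [(mem_filter.1 ht).2]

theorem pow_mul_inv_pow_sub_pow (x w : ℂ) (hx : x ≠ 0) {j m : ℕ} (hj : j ≤ m) :
    x ^ m * (x⁻¹ ^ j - w ^ j) = (1 - w * x) * ∑ l ∈ range j, w ^ l * x ^ (m - j + l) := by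
  have hm : x ^ m = x ^ (m - j) * x ^ j := by rw [← pow_add, Nat.sub_add_cancel hj]
  calc x ^ m * (x⁻¹ ^ j - w ^ j) = x ^ (m - j) * (1 - (w * x) ^ j) := by
        have hinv : x ^ j * x⁻¹ ^ j = 1 := by rw [← mul_pow, mul_inv_cancel₀ hx, one_pow]
        linear_combination x ^ (m - j) * hinv + (x⁻¹ ^ j - w ^ j) * hm
    _ = _ := by
        rw [← mul_neg_geom_sum, mul_sum, mul_sum, mul_sum]
        refine sum_congr rfl fun l _ => ?_
        rw [pow_add, mul_pow]; ring

theorem pow_mul_evalP_sub (n m : ℕ) (d : ℕ → ℕ → ℂ) (z w x : ℂ) (hx : x ≠ 0) :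
    x ^ m * (evalP n m d z x⁻¹ - evalP n m d z w) = (1 - w * x) *
      ∑ i ∈ range (n + 1), ∑ j ∈ range (m + 1), ∑ l ∈ range j,
        d i j * z ^ i * w ^ l * x ^ (m - j + l) := by
  simp only [evalP, mul_sum, ← sum_sub_distrib]
  refine sum_congr rfl fun i _ => sum_congr rfl fun j hj => ?_
  have key := pow_mul_inv_pow_sub_pow x w hx (Nat.lt_succ_iff.mp (mem_range.mp hj))
  rw [mul_sum] at key
  calc x ^ m * (d i j * z ^ i * x⁻¹ ^ j - d i j * z ^ i * w ^ j)
      = d i j * z ^ i * (x ^ m * (x⁻¹ ^ j - w ^ j)) := by ring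
    _ = _ := by
        rw [key, mul_sum]
        exact sum_congr rfl fun l _ => by ring

theorem exists_coeff_eq_triangle_sum (n m : ℕ) (d : ℕ → ℕ → ℂ) :
    ∃ α : ℕ → ℕ → ℕ → ℂ, ∀ z w x : ℂ,
      ∑ i ∈ range (n + 1), ∑ j ∈ range (m + 1), ∑ l ∈ range j,
          d i j * z ^ i * w ^ l * x ^ (m - j + l) =
        ∑ i ∈ range (n + 1), ∑ j ∈ range m, ∑ k ∈ range m,
          α i j k * z ^ i * w ^ j * x ^ k := by
  obtain ⟨α, hα⟩ := exists_coeff_eq_sum_monomials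
    ((range (n + 1) ×ˢ range (m + 1)).sigma fun p => range p.2)
    (fun t => d t.1.1 t.1.2) (fun t => (t.1.1, t.2, m - t.1.2 + t.2))
    (N₁ := n + 1) (N₂ := m) (N₃ := m) (by
      rintro ⟨⟨i, j⟩, l⟩ ht
      simp only [mem_sigma, mem_product, mem_range] at ht ⊢
      omega)
  refine ⟨α, fun z w x => ?_⟩
  rw [← hα, sum_sigma, sum_product]

theorem exists_coeff_divided_difference (n m : ℕ) (d : ℕ → ℕ → ℂ) :
    ∃ α : ℕ → ℕ → ℕ → ℂ, ∀ z w x : ℂ, x ≠ 0 → w * x ≠ 1 →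
      x ^ m * (evalP n m d z x⁻¹ - evalP n m d z w) / (1 - w * x) =
        ∑ i ∈ range (n + 1), ∑ j ∈ range m, ∑ k ∈ range m,
          α i j k * z ^ i * w ^ j * x ^ k := by
  obtain ⟨α, hα⟩ := exists_coeff_eq_triangle_sum n m d
  refine ⟨α, fun z w x hx hwx => ?_⟩
  rw [pow_mul_evalP_sub n m d z w x hx, mul_div_cancel_left₀ _ (sub_ne_zero.mpr hwx.symm), hα]

theorem evalP_neg (n m : ℕ) (c : ℕ → ℕ → ℂ) (z w : ℂ) :
    evalP n m (-c) z w = -evalP n m c z w := by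
  simp only [evalP, Pi.neg_apply, neg_mul, sum_neg_distrib]

theorem Bfun_eq_divided_difference_neg (n m : ℕ) (c : ℕ → ℕ → ℂ) (z w η : ℂ) :
    Bfun n m c z w η = (star η) ^ m *
      (evalP n m (-c) z (star η)⁻¹ - evalP n m (-c) z w) / (1 - w * star η) := by
  rw [Bfun, evalP_neg, evalP_neg, neg_sub_neg]

theorem evalP_reflC_reflC (n m : ℕ) (c : ℕ → ℕ → ℂ) :
    evalP n m (reflC n m (reflC n m c)) = evalP n m c := by
  funext z w
  refine sum_congr rfl fun i hi => sum_congr rfl fun j hj => ?_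
  rw [mem_range] at hi hj
  simp only [reflC, star_star, Nat.sub_sub_self (Nat.lt_succ_iff.mp hi),
    Nat.sub_sub_self (Nat.lt_succ_iff.mp hj)]

theorem evalP_reflC_s5 (n m : ℕ) (c : ℕ → ℕ → ℂ) (z w : ℂ) :
    evalP n m (reflC n m c) z w =
      ∑ i ∈ range (n + 1), ∑ j ∈ range (m + 1),
        star (c i j) * z ^ (n - i) * w ^ (m - j) := by
  rw [evalP, ← sum_range_reflect]
  refine sum_congr rfl fun i hi => ?_
  rw [← sum_range_reflect]
  refine sum_congr rfl fun j hj => ?_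
  rw [mem_range] at hi hj
  simp only [reflC, add_tsub_cancel_right, Nat.sub_sub_self (Nat.lt_succ_iff.mp hi),
    Nat.sub_sub_self (Nat.lt_succ_iff.mp hj)]

theorem pow_mul_star_evalP_inv_star (n m : ℕ) (c : ℕ → ℕ → ℂ) {z η : ℂ} (hz : z ≠ 0)
    (hη : η ≠ 0) :
    z ^ n * star (evalP n m c (star z)⁻¹ η) =
      (star η) ^ m * evalP n m (reflC n m c) z (star η)⁻¹ := by
  have hη' : star η ≠ 0 := star_ne_zero.mpr hη
  rw [evalP_reflC_s5]
  simp only [evalP, star_sum, mul_sum]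
  refine sum_congr rfl fun i hi => sum_congr rfl fun j hj => ?_
  rw [mem_range, Nat.lt_succ_iff] at hi hj
  have hzi : z ^ n * z⁻¹ ^ i = z ^ (n - i) := by rw [pow_sub₀ z hz hi, inv_pow]
  have hηj : star η ^ m * (star η)⁻¹ ^ (m - j) = star η ^ j := by
    rw [inv_pow, ← pow_sub₀ _ hη' (Nat.sub_le m j), Nat.sub_sub_self hj]
  simp only [star_mul', star_pow, star_inv₀, star_star]
  linear_combination (star (c i j) * star η ^ j) * hzi - (star (c i j) * z ^ (n - i)) * hηj

theorem Lnum_eq (n m : ℕ) (c : ℕ → ℕ → ℂ) {z η : ℂ} (hz : z ≠ 0) (hη : η ≠ 0) (w : ℂ) :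
    Lnum n m c z w η = (star η) ^ m *
      (evalP n m c z w * evalP n m (reflC n m c) z (star η)⁻¹ -
        evalP n m (reflC n m c) z w * evalP n m c z (star η)⁻¹) := by
  have hp := pow_mul_star_evalP_inv_star n m c hz hη
  have hp' := pow_mul_star_evalP_inv_star n m (reflC n m c) hz hη
  rw [evalP_reflC_reflC] at hp'
  rw [Lnum]
  linear_combination evalP n m c z w * hp - evalP n m (reflC n m c) z w * hp'

theorem statement5_general (n m : ℕ) (c : ℕ → ℕ → ℂ)
    (L : ℂ → ℂ → ℂ → ℂ)
    (hL : ∀ z w η : ℂ, z ≠ 0 → (1 - w * star η) * L z w η = Lnum n m c z w η) :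
    (∃ α : ℕ → ℕ → ℕ → ℂ, ∀ z w η : ℂ, η ≠ 0 → w * star η ≠ 1 →
      Afun n m c z w η = ∑ i ∈ Finset.range (n + 1), ∑ j ∈ Finset.range m,
        ∑ k ∈ Finset.range m, α i j k * z ^ i * w ^ j * (star η) ^ k) ∧
    (∃ β : ℕ → ℕ → ℕ → ℂ, ∀ z w η : ℂ, η ≠ 0 → w * star η ≠ 1 →
      Bfun n m c z w η = ∑ i ∈ Finset.range (n + 1), ∑ j ∈ Finset.range m,
        ∑ k ∈ Finset.range m, β i j k * z ^ i * w ^ j * (star η) ^ k) ∧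
    (∀ z w η : ℂ, z ≠ 0 → η ≠ 0 → w * star η ≠ 1 →
      L z w η = evalP n m c z w * Afun n m c z w η
        + evalP n m (reflC n m c) z w * Bfun n m c z w η) := by
  obtain ⟨α, hα⟩ := exists_coeff_divided_difference n m (reflC n m c)
  obtain ⟨β, hβ⟩ := exists_coeff_divided_difference n m (-c)
  refine ⟨⟨α, fun z w η hη hwη => hα z w _ (star_ne_zero.mpr hη) hwη⟩,
    ⟨β, fun z w η hη hwη => ?_⟩, fun z w η hz hη hwη => ?_⟩
  · rw [Bfun_eq_divided_difference_neg]
    exact hβ z w _ (star_ne_zero.mpr hη) hwη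
  · have hden : 1 - w * star η ≠ 0 := sub_ne_zero.mpr hwη.symm
    apply mul_left_cancel₀ hden
    have hA : (1 - w * star η) * Afun n m c z w η = _ := mul_div_cancel₀ _ hden
    have hB : (1 - w * star η) * Bfun n m c z w η = _ := mul_div_cancel₀ _ hden
    rw [hL z w η hz, Lnum_eq n m c hz hη]
    linear_combination -evalP n m c z w * hA - evalP n m (reflC n m c) z w * hB

/-- L = p·A + p̃·B, where A and B are polynomials of degree at most
(n, m-1) in (z,w) and at most m-1 in η̄. -/
theorem statement5 (n m : ℕ) (c : ℕ → ℕ → ℂ)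
    (hstable : Stable n m c) (hdeg : DegreeNM n m c)
    (L : ℂ → ℂ → ℂ → ℂ)
    (hL : ∀ z w η : ℂ, z ≠ 0 → (1 - w * star η) * L z w η = Lnum n m c z w η) :
    (∃ α : ℕ → ℕ → ℕ → ℂ, ∀ z w η : ℂ, η ≠ 0 → w * star η ≠ 1 →
      Afun n m c z w η = ∑ i ∈ Finset.range (n + 1), ∑ j ∈ Finset.range m,
        ∑ k ∈ Finset.range m, α i j k * z ^ i * w ^ j * (star η) ^ k) ∧
    (∃ β : ℕ → ℕ → ℕ → ℂ, ∀ z w η : ℂ, η ≠ 0 → w * star η ≠ 1 →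
      Bfun n m c z w η = ∑ i ∈ Finset.range (n + 1), ∑ j ∈ Finset.range m,
        ∑ k ∈ Finset.range m, β i j k * z ^ i * w ^ j * (star η) ^ k) ∧
    (∀ z w η : ℂ, z ≠ 0 → η ≠ 0 → w * star η ≠ 1 →
      L z w η = evalP n m c z w * Afun n m c z w η
        + evalP n m (reflC n m c) z w * Bfun n m c z w η) :=
  statement5_general n m c L hL
end

section
/- Let p be stable of degree (n,m) and write L(z,w;η) = Σ_{k=0}^{m−1} a_k(z,w) η̄^k. Then in L²(dσ/|p|²), each a_k is orthogonal to the set {z^i w^j : (i,j) ≰ (n,k) and (i,j) ≱ (n,m)}. -/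
open Complex MeasureTheory Finset
open scoped ComplexInnerProductSpace

/-!
Solving `(1 - w η̄) L = Lnum` coefficientwise in `η̄` gives `a_k = Σ_{l ≤ k} w^{k-l} B_l`, where
`B_l` is the coefficient of `η̄^l` in `Lnum`. Write `p = Σ_l p_l(z) w^l`. On the torus
`p̃ = zⁿ wᵐ p̄`, and the integrand of `⟨z^i w^j, a_k⟩` becomes, after conjugation,
`Σ_{l ≤ k} (z^{n-i} w^{k-l-j} conj (p_l / p) - z^{n-i} w^{m+k-l-j} p_{m-l} / p)`.
As `p` is stable, `p_l / p` is holomorphic near the closed bidisk, so by Cauchy's theorem in one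
variable (after Fubini) `∫ z^N w^M p_l / p = 0` as soon as `N ≥ 1` or `M ≥ 1`, and
`∫ z^N w^M conj (p_l / p) = 0` as soon as `N ≤ -1` or `M ≤ -1`. The two conditions on `(i, j)` put
every term in one of these cases.
-/

open Function

namespace Polynomial

variable {R : Type*} [CommRing R]

lemma coeff_sum_range_C_mul_X_pow (f : ℕ → R) {n k : ℕ} (hk : k < n) :
    (∑ i ∈ range n, C (f i) * X ^ i).coeff k = f k := by
  simp [finsetSum_coeff, hk]

lemma sum_range_pow_mul_coeff_one_sub_C_mul_X_mul (v : R) (S : R[X]) (k : ℕ) :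
    ∑ l ∈ range (k + 1), v ^ (k - l) * ((1 - C v * X) * S).coeff l = S.coeff k := by
  have hcoeff : ∀ l, ((1 - C v * X) * S).coeff (l + 1) = S.coeff (l + 1) - v * S.coeff l := by
    intro l
    rw [sub_mul, one_mul, coeff_sub, mul_assoc, coeff_C_mul, coeff_X_mul]
  induction k with
  | zero => simp [sub_mul, mul_assoc]
  | succ k ih =>
    rw [sum_range_succ, Nat.sub_self, pow_zero, one_mul, hcoeff, ← ih, mul_sum]
    have hpow : ∀ l ∈ range (k + 1), v ^ (k + 1 - l) * ((1 - C v * X) * S).coeff l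
        = v * (v ^ (k - l) * ((1 - C v * X) * S).coeff l) := fun l hl => by
      rw [Nat.sub_add_comm (Nat.lt_succ_iff.mp (mem_range.mp hl)), pow_succ']
      ring
    rw [sum_congr rfl hpow]
    ring

lemma eq_sum_pow_mul_of_one_sub_mul_eq [IsDomain R] [Infinite R] {m k : ℕ} (hk : k < m)
    {v : R} {A B : ℕ → R}
    (h : ∀ x, (1 - v * x) * ∑ i ∈ range m, A i * x ^ i = ∑ l ∈ range (m + 1), B l * x ^ l) :
    A k = ∑ l ∈ range (k + 1), v ^ (k - l) * B l := by
  have hpoly : (1 - C v * X) * ∑ i ∈ range m, C (A i) * X ^ i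
      = ∑ l ∈ range (m + 1), C (B l) * X ^ l :=
    funext fun x => by simpa [eval_finsetSum] using h x
  rw [← coeff_sum_range_C_mul_X_pow A hk, ← sum_range_pow_mul_coeff_one_sub_C_mul_X_mul v, hpoly]
  exact sum_congr rfl fun l hl => by
    rw [coeff_sum_range_C_mul_X_pow B (by have := mem_range.mp hl; omega)]

end Polynomial

namespace StablePoly

noncomputable def expI (θ : ℝ) : ℂ := exp (θ * I)

lemma expI_ne_zero (θ : ℝ) : expI θ ≠ 0 := exp_ne_zero _

lemma norm_expI (θ : ℝ) : ‖expI θ‖ = 1 := by simp [expI, norm_exp]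

lemma circleMap_zero_one (θ : ℝ) : circleMap 0 1 θ = expI θ := by simp [circleMap, expI]

@[fun_prop]
lemma continuous_expI : Continuous expI := by unfold expI; fun_prop

lemma continuous_expI_zpow (N : ℤ) : Continuous fun θ => expI θ ^ N :=
  continuous_expI.zpow₀ N fun θ => Or.inl (expI_ne_zero θ)

lemma star_eq_inv_of_norm_eq_one {u : ℂ} (hu : ‖u‖ = 1) : star u = u⁻¹ :=
  (inv_eq_conj hu).symm

lemma star_expI_zpow (θ : ℝ) (N : ℤ) : star (expI θ ^ N) = expI θ ^ (-N) := by
  rw [star_zpow₀, star_eq_inv_of_norm_eq_one (norm_expI θ), inv_zpow, zpow_neg]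

lemma circleIntegral_zpow_mul_eq_zero {g : ℂ → ℂ} (hg : ∀ z : ℂ, ‖z‖ ≤ 1 → DifferentiableAt ℂ g z)
    {N : ℤ} (hN : 1 ≤ N) :
    ∫ θ in (0:ℝ)..2 * Real.pi, expI θ ^ N * g (expI θ) = 0 := by
  lift N to ℕ using by omega
  obtain ⟨N, rfl⟩ : ∃ M, N = M + 1 := ⟨N - 1, by omega⟩
  have hd : ∀ z : ℂ, ‖z‖ ≤ 1 → DifferentiableAt ℂ (fun z => z ^ N * g z) z :=
    fun z hz => (differentiableAt_pow _).mul (hg z hz)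
  have h0 : (∮ z in C(0, 1), z ^ N * g z) = 0 :=
    circleIntegral_eq_zero_of_differentiable_on_off_countable zero_le_one Set.countable_empty
      (fun z hz => (hd z (mem_closedBall_zero_iff.mp hz)).continuousAt.continuousWithinAt)
      (fun z hz => hd z (mem_ball_zero_iff.mp hz.1).le)
  simp only [circleIntegral, deriv_circleMap, circleMap_zero_one, smul_eq_mul] at h0
  rw [← mul_right_inj' I_ne_zero, ← intervalIntegral.integral_const_mul, mul_zero, ← h0]
  refine intervalIntegral.integral_congr fun θ _ => ?_
  rw [zpow_natCast]
  ring

noncomputable def torusInt (f : ℝ → ℝ → ℂ) : ℂ :=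
  ∫ θ in (0:ℝ)..2 * Real.pi, ∫ φ in (0:ℝ)..2 * Real.pi, f θ φ

lemma torusInt_star (f : ℝ → ℝ → ℂ) :
    torusInt (fun θ φ => star (f θ φ)) = star (torusInt f) := by
  simp only [torusInt, Complex.star_def, intervalIntegral.intervalIntegral_conj]

section Continuous

variable {f g : ℝ → ℝ → ℂ} (hf : Continuous (uncurry f))
include hf

lemma intervalIntegrable_of_continuous_uncurry (θ : ℝ) :
    IntervalIntegrable (f θ) volume 0 (2 * Real.pi) :=
  (hf.comp (Continuous.prodMk_right θ)).intervalIntegrable _ _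

lemma intervalIntegrable_integral_of_continuous_uncurry :
    IntervalIntegrable (fun θ => ∫ φ in (0:ℝ)..2 * Real.pi, f θ φ) volume 0 (2 * Real.pi) :=
  (intervalIntegral.continuous_parametric_intervalIntegral_of_continuous' hf _ _).intervalIntegrable
    _ _

lemma torusInt_swap :
    torusInt f = ∫ φ in (0:ℝ)..2 * Real.pi, ∫ θ in (0:ℝ)..2 * Real.pi, f θ φ := by
  have h2π : (0:ℝ) ≤ 2 * Real.pi := by positivity
  have hint : Integrable (uncurry f)
      ((volume.restrict (Set.Ioc (0:ℝ) (2 * Real.pi))).prod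
        (volume.restrict (Set.Ioc (0:ℝ) (2 * Real.pi)))) := by
    rw [Measure.prod_restrict]
    exact (hf.continuousOn.integrableOn_compact (isCompact_Icc.prod isCompact_Icc)).mono_set
      (Set.prod_mono Set.Ioc_subset_Icc_self Set.Ioc_subset_Icc_self)
  simp only [torusInt, intervalIntegral.integral_of_le h2π]
  exact integral_integral_swap hint

lemma torusInt_sub (hg : Continuous (uncurry g)) :
    torusInt (fun θ φ => f θ φ - g θ φ) = torusInt f - torusInt g := by
  unfold torusInt
  rw [intervalIntegral.integral_congr fun θ _ => intervalIntegral.integral_sub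
      (intervalIntegrable_of_continuous_uncurry hf θ)
      (intervalIntegrable_of_continuous_uncurry hg θ)]
  exact intervalIntegral.integral_sub (intervalIntegrable_integral_of_continuous_uncurry hf)
    (intervalIntegrable_integral_of_continuous_uncurry hg)

end Continuous

lemma torusInt_finsetSum {ι : Type*} (s : Finset ι) (f : ι → ℝ → ℝ → ℂ)
    (hf : ∀ l ∈ s, Continuous (uncurry (f l))) :
    torusInt (fun θ φ => ∑ l ∈ s, f l θ φ) = ∑ l ∈ s, torusInt (f l) := by
  unfold torusInt
  rw [intervalIntegral.integral_congr fun θ _ => intervalIntegral.integral_finsetSum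
      fun l hl => intervalIntegrable_of_continuous_uncurry (hf l hl) θ]
  exact intervalIntegral.integral_finsetSum fun l hl =>
    intervalIntegrable_integral_of_continuous_uncurry (hf l hl)

lemma continuous_uncurry_zpow_mul {G : ℝ → ℝ → ℂ} (hG : Continuous (uncurry G))
    (N M : ℤ) : Continuous (uncurry fun θ φ => expI θ ^ N * expI φ ^ M * G θ φ) :=
  (((continuous_expI_zpow N).comp continuous_fst).mul
    ((continuous_expI_zpow M).comp continuous_snd)).mul hG

section HolomorphicOnBidisk

variable {g : ℂ → ℂ → ℂ}
  (hg : ∀ z w : ℂ, ‖z‖ ≤ 1 → ‖w‖ ≤ 1 → DifferentiableAt ℂ (uncurry g) (z, w))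
include hg

lemma continuous_comp_expI : Continuous (uncurry fun θ φ => g (expI θ) (expI φ)) :=
  continuous_iff_continuousAt.mpr fun x =>
    (hg _ _ (norm_expI x.1).le (norm_expI x.2).le).continuousAt.comp
      (f := fun x : ℝ × ℝ => (expI x.1, expI x.2)) (by fun_prop)

lemma continuous_star_comp_expI :
    Continuous (uncurry fun θ φ => star (g (expI θ) (expI φ))) :=
  (continuous_comp_expI hg).star

lemma torusInt_zpow_mul_eq_zero {N M : ℤ} (h : 1 ≤ N ∨ 1 ≤ M) :
    torusInt (fun θ φ => expI θ ^ N * expI φ ^ M * g (expI θ) (expI φ)) = 0 := by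
  rcases h with hN | hM
  · rw [torusInt_swap (continuous_uncurry_zpow_mul (continuous_comp_expI hg) N M)]
    refine (intervalIntegral.integral_congr fun φ _ => ?_).trans intervalIntegral.integral_zero
    have hgφ : ∀ z : ℂ, ‖z‖ ≤ 1 → DifferentiableAt ℂ (g · (expI φ)) z := fun z hz =>
      (hg z _ hz (norm_expI φ).le).comp z (f := fun z => (z, expI φ)) (by fun_prop)
    simp_rw [mul_right_comm _ (expI φ ^ M), intervalIntegral.integral_mul_const,
      circleIntegral_zpow_mul_eq_zero hgφ hN, zero_mul]
  · refine (intervalIntegral.integral_congr fun θ _ => ?_).trans intervalIntegral.integral_zero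
    have hgθ : ∀ w : ℂ, ‖w‖ ≤ 1 → DifferentiableAt ℂ (g (expI θ)) w := fun w hw =>
      (hg _ w (norm_expI θ).le hw).comp w (f := fun w => (expI θ, w)) (by fun_prop)
    simp_rw [mul_assoc, intervalIntegral.integral_const_mul,
      circleIntegral_zpow_mul_eq_zero hgθ hM, mul_zero]

lemma torusInt_zpow_mul_star_eq_zero {N M : ℤ} (h : N ≤ -1 ∨ M ≤ -1) :
    torusInt (fun θ φ => expI θ ^ N * expI φ ^ M * star (g (expI θ) (expI φ))) = 0 := by
  have hconj : ∀ θ φ, expI θ ^ N * expI φ ^ M * star (g (expI θ) (expI φ))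
      = star (expI θ ^ (-N) * expI φ ^ (-M) * g (expI θ) (expI φ)) := fun θ φ => by
    simp only [star_mul', star_expI_zpow, neg_neg]
  simp_rw [hconj, torusInt_star, torusInt_zpow_mul_eq_zero hg (N := -N) (M := -M) (by omega),
    star_zero]

end HolomorphicOnBidisk

lemma sum_star_reflect_mul_pow {u : ℂ} (hu : ‖u‖ = 1) (n : ℕ) (f : ℕ → ℂ) :
    ∑ i ∈ range (n + 1), star (f (n - i)) * u ^ i
      = u ^ n * star (∑ i ∈ range (n + 1), f i * u ^ i) := by
  have hu0 : u ≠ 0 := norm_ne_zero_iff.mp (hu ▸ one_ne_zero)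
  rw [← sum_range_reflect, star_sum, mul_sum]
  refine sum_congr rfl fun i hi => ?_
  have hi : i ≤ n := Nat.lt_succ_iff.mp (mem_range.mp hi)
  rw [star_mul', star_pow, star_eq_inv_of_norm_eq_one hu, inv_pow, add_tsub_cancel_right,
    pow_sub₀ u hu0 hi, Nat.sub_sub_self hi]
  ring

noncomputable def wCoeff (n : ℕ) (c : ℕ → ℕ → ℂ) (l : ℕ) (z : ℂ) : ℂ :=
  ∑ i ∈ range (n + 1), c i l * z ^ i

lemma evalP_eq_sum_wCoeff (n m : ℕ) (c : ℕ → ℕ → ℂ) (z w : ℂ) :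
    evalP n m c z w = ∑ l ∈ range (m + 1), wCoeff n c l z * w ^ l := by
  simp only [evalP, wCoeff, sum_mul]
  exact sum_comm

lemma wCoeff_reflC {u : ℂ} (hu : ‖u‖ = 1) (n m : ℕ) (c : ℕ → ℕ → ℂ) (l : ℕ) :
    wCoeff n (reflC n m c) l u = u ^ n * star (wCoeff n c (m - l) u) :=
  sum_star_reflect_mul_pow hu n (c · (m - l))

lemma evalP_reflC {u v : ℂ} (hu : ‖u‖ = 1) (hv : ‖v‖ = 1) (n m : ℕ) (c : ℕ → ℕ → ℂ) :
    evalP n m (reflC n m c) u v = u ^ n * v ^ m * star (evalP n m c u v) := by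
  simp only [evalP_eq_sum_wCoeff, wCoeff_reflC hu, mul_assoc, ← mul_sum]
  rw [sum_star_reflect_mul_pow hv m (wCoeff n c · u)]

noncomputable def lnumCoeff (n m : ℕ) (c : ℕ → ℕ → ℂ) (z w : ℂ) (l : ℕ) : ℂ :=
  z ^ n * (evalP n m c z w * star (wCoeff n c l (star z)⁻¹)
    - evalP n m (reflC n m c) z w * star (wCoeff n (reflC n m c) l (star z)⁻¹))

lemma Lnum_eq_sum_lnumCoeff (n m : ℕ) (c : ℕ → ℕ → ℂ) (z w η : ℂ) :
    Lnum n m c z w η = ∑ l ∈ range (m + 1), lnumCoeff n m c z w l * star η ^ l := by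
  simp only [Lnum, lnumCoeff, evalP_eq_sum_wCoeff n m _ _ η, star_sum, star_mul', star_pow,
    mul_sum, ← sum_sub_distrib]
  exact sum_congr rfl fun l _ => by ring

lemma lnumCoeff_of_norm_eq_one {u v : ℂ} (hu : ‖u‖ = 1) (hv : ‖v‖ = 1) (n m : ℕ)
    (c : ℕ → ℕ → ℂ) (l : ℕ) :
    lnumCoeff n m c u v l = u ^ n * (evalP n m c u v * star (wCoeff n c l u)
      - v ^ m * star (evalP n m c u v) * wCoeff n c (m - l) u) := by
  have hu' : u ^ n * star (u ^ n) = 1 := by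
    rw [star_pow, star_eq_inv_of_norm_eq_one hu, inv_pow,
      mul_inv_cancel₀ (pow_ne_zero n (norm_ne_zero_iff.mp (hu ▸ one_ne_zero)))]
  rw [lnumCoeff, star_eq_inv_of_norm_eq_one hu, inv_inv, evalP_reflC hu hv, wCoeff_reflC hu,
    star_mul', star_star]
  linear_combination (-(u ^ n) * v ^ m * star (evalP n m c u v) * wCoeff n c (m - l) u) * hu'

lemma tmono_eq (i j : ℤ) (θ φ : ℝ) : tmono i j θ φ = expI θ ^ i * expI φ ^ j := by
  rw [tmono, expI, expI, ← exp_int_mul, ← exp_int_mul, ← exp_add]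
  ring_nf

theorem _root_.IsLCoeff.evalP_eq_sum_lnumCoeff {n m : ℕ} {c : ℕ → ℕ → ℂ} {a : ℕ → ℕ → ℕ → ℂ}
    (ha : IsLCoeff n m c a) {z : ℂ} (hz : z ≠ 0) (w : ℂ) {k : ℕ} (hk : k < m) :
    evalP (2 * n) (m - 1) (a k) z w = ∑ l ∈ range (k + 1), w ^ (k - l) * lnumCoeff n m c z w l :=
  Polynomial.eq_sum_pow_mul_of_one_sub_mul_eq hk fun x => by
    simpa [Lsum, Lnum_eq_sum_lnumCoeff] using ha z w (star x) hz

lemma star_integrand_eq_sum {n m : ℕ} {c : ℕ → ℕ → ℂ} (hst : Stable n m c)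
    {a : ℕ → ℕ → ℕ → ℂ} (ha : IsLCoeff n m c a) {k : ℕ} (hk : k < m) (i j : ℤ) (θ φ : ℝ) :
    star (tmono i j θ φ * star (onT (2 * n) (m - 1) (a k) θ φ)
        / ((normSq (onT n m c θ φ) : ℝ) : ℂ))
      = ∑ l ∈ range (k + 1),
          (expI θ ^ ((n : ℤ) - i) * expI φ ^ ((k : ℤ) - l - j)
              * star (wCoeff n c l (expI θ) / evalP n m c (expI θ) (expI φ))
            - expI θ ^ ((n : ℤ) - i) * expI φ ^ ((m : ℤ) + k - l - j)
              * (wCoeff n c (m - l) (expI θ) / evalP n m c (expI θ) (expI φ))) := by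
  change star (tmono i j θ φ * star (evalP (2 * n) (m - 1) (a k) (expI θ) (expI φ))
    / ((normSq (evalP n m c (expI θ) (expI φ)) : ℝ) : ℂ)) = _
  rw [← mul_conj, ← Complex.star_def, star_div₀, star_mul', star_mul', star_star, star_star,
    tmono_eq, star_mul', star_expI_zpow, star_expI_zpow,
    ha.evalP_eq_sum_lnumCoeff (expI_ne_zero θ) _ hk, mul_sum, sum_div, mul_comm (star _)]
  refine sum_congr rfl fun l hl => ?_
  have hP := hst _ _ (norm_expI θ).le (norm_expI φ).le
  have hP' := star_ne_zero.mpr hP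
  have hu := expI_ne_zero θ
  have hv := expI_ne_zero φ
  simp only [lnumCoeff_of_norm_eq_one (norm_expI θ) (norm_expI φ), star_div₀, zpow_sub₀ hu,
    zpow_sub₀ hv, zpow_add₀ hv, zpow_neg, zpow_natCast,
    pow_sub₀ _ hv (Nat.lt_succ_iff.mp (mem_range.mp hl))]
  field_simp

lemma differentiableAt_wCoeff_div {n m : ℕ} {c : ℕ → ℕ → ℂ} (hst : Stable n m c) (l : ℕ)
    (z w : ℂ) (hz : ‖z‖ ≤ 1) (hw : ‖w‖ ≤ 1) :
    DifferentiableAt ℂ (uncurry fun z w => wCoeff n c l z / evalP n m c z w) (z, w) := by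
  change DifferentiableAt ℂ (fun x : ℂ × ℂ => wCoeff n c l x.1 / evalP n m c x.1 x.2) (z, w)
  simp only [wCoeff, evalP]
  fun_prop (disch := exact hst z w hz hw)

end StablePoly

open StablePoly

theorem statement7_general (n m : ℕ) (c : ℕ → ℕ → ℂ)
    (hstable : Stable n m c)
    (a : ℕ → ℕ → ℕ → ℂ) (ha : IsLCoeff n m c a)
    (k : ℕ) (hk : k < m) (i j : ℤ)
    (h1 : ¬(i ≤ (n : ℤ) ∧ j ≤ (k : ℤ)))
    (h2 : ¬((n : ℤ) ≤ i ∧ (m : ℤ) ≤ j)) :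
    ip n m c (tmono i j) (onT (2 * n) (m - 1) (a k)) = 0 := by
  have hg := differentiableAt_wCoeff_div hstable
  suffices torusInt (fun θ φ => star (tmono i j θ φ * star (onT (2 * n) (m - 1) (a k) θ φ)
      / ((normSq (onT n m c θ φ) : ℝ) : ℂ))) = 0 by
    rw [torusInt_star, star_eq_zero] at this
    rw [ip, ← torusInt, this, mul_zero]
  have hcont₁ (l : ℕ) := continuous_uncurry_zpow_mul (continuous_star_comp_expI (hg l))
  have hcont₂ (l : ℕ) := continuous_uncurry_zpow_mul (continuous_comp_expI (hg (m - l)))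
  simp_rw [star_integrand_eq_sum hstable ha hk i j]
  rw [torusInt_finsetSum _ _ fun l _ => ?_]
  · refine sum_eq_zero fun l hl => ?_
    have hlk : l ≤ k := Nat.lt_succ_iff.mp (mem_range.mp hl)
    rw [torusInt_sub (hcont₁ l _ _) (hcont₂ l _ _),
      torusInt_zpow_mul_star_eq_zero (hg l) (by omega),
      torusInt_zpow_mul_eq_zero (hg (m - l)) (by omega), sub_zero]
  · exact (hcont₁ l _ _).sub (hcont₂ l _ _)

/-- each a_k is orthogonal to {z^i w^j : (i,j) ≰ (n,k) and (i,j) ≱ (n,m)}. -/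
theorem statement7 (n m : ℕ) (c : ℕ → ℕ → ℂ)
    (hstable : Stable n m c) (hdeg : DegreeNM n m c)
    (a : ℕ → ℕ → ℕ → ℂ) (ha : IsLCoeff n m c a)
    (k : ℕ) (hk : k < m) (i j : ℤ)
    (h1 : ¬(i ≤ (n : ℤ) ∧ j ≤ (k : ℤ)))
    (h2 : ¬((n : ℤ) ≤ i ∧ (m : ℤ) ≤ j)) :
    ip n m c (tmono i j) (onT (2 * n) (m - 1) (a k)) = 0 :=
  statement7_general n m c hstable a ha k hk i j h1 h2
end

section
/- Let p(z,w) be a stable polynomial of degree (n,m), written p(z,w) = Σ_{i=0}^m p_i(z) w^i. Then for every z on the unit circle, the m×m matrix T_m(z) = T₁(z)T₁(z)* − T₂(z)*T₂(z) is positive definite, where T₁(z) is the lower triangular Toeplitz matrix with first column (p₀(z), p₁(z), …, p_{m−1}(z)) and T₂(z) is the upper triangular Toeplitz matrix with first row (p_m(z), p_{m−1}(z), …, p₁(z)). -/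
open Complex MeasureTheory Finset Matrix
open scoped ComplexInnerProductSpace ComplexOrder

noncomputable section

/-- The coefficient polynomial `p_l(z)` of `w^l` in `p(z,w)`, with `ℤ` index
(zero outside `0 ≤ l ≤ m`). -/
def pcoefZ (n m : ℕ) (c : ℕ → ℕ → ℂ) (l : ℤ) (z : ℂ) : ℂ :=
  if 0 ≤ l ∧ l ≤ (m : ℤ) then ∑ s ∈ Finset.range (n + 1), c s l.toNat * z ^ s else 0

/-- The lower triangular Toeplitz matrix with first column `(p₀(z), …, p_{m-1}(z))`. -/
def T1mat (n m : ℕ) (c : ℕ → ℕ → ℂ) (z : ℂ) : Matrix (Fin m) (Fin m) ℂ :=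
  fun i j => if (j : ℕ) ≤ (i : ℕ) then pcoefZ n m c ((i : ℤ) - (j : ℤ)) z else 0

/-- The upper triangular Toeplitz matrix with first row `(p_m(z), p_{m-1}(z), …, p₁(z))`. -/
def T2mat (n m : ℕ) (c : ℕ → ℕ → ℂ) (z : ℂ) : Matrix (Fin m) (Fin m) ℂ :=
  fun i j => if (i : ℕ) ≤ (j : ℕ)
    then pcoefZ n m c ((m : ℤ) - ((j : ℤ) - (i : ℤ))) z else 0

end

/-!
Fix `z` on the circle and let `q(w) = p(z, w)`; it has degree `≤ m` and no zeros in the closed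
disc. Let `q̄` be `q` with conjugated coefficients and `q♯(w) = wᵐ q(1/w)` its reciprocal. For
`x ≠ 0` let `f` be the polynomial whose coefficients are `x` reversed; then
`x* T x = N(q̄ f) - N(q♯ f)`, where `N` is the sum of the squared moduli of the first `m`
coefficients.
Write `q̄` as a product of exactly `m` factors `u X + v` with `|u| < |v|` (one per root, which lies
outside the disc, padded with constants); then `q♯` is the product of the factors `v̄ X + ū`.
Replacing `(u X + v) g` by `(v̄ X + ū) g` lowers `N` by `(|v|² - |u|²) |g_{m-1}|²`, by the identity
`|u y + v x|² - |v̄ y + ū x|² = (|v|² - |u|²)(|x|² - |y|²)` applied coefficientwise and telescoped.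
Hence `N(q♯ f) ≤ N(q̄ f)`, and following the equality case through the swaps forces `f = 0`.
-/

open Polynomial ComplexConjugate

noncomputable section

def truncNormSq (m : ℕ) (g : ℂ[X]) : ℝ := ∑ t ∈ range m, normSq (g.coeff t)

lemma truncNormSq_succ (m : ℕ) (g : ℂ[X]) :
    truncNormSq (m + 1) g = truncNormSq m g + normSq (g.coeff m) :=
  sum_range_succ _ _

lemma truncNormSq_X_mul (m : ℕ) (g : ℂ[X]) : truncNormSq (m + 1) (X * g) = truncNormSq m g := by
  simp [truncNormSq, sum_range_succ', coeff_X_mul]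

lemma truncNormSq_C_mul (m : ℕ) (a : ℂ) (g : ℂ[X]) :
    truncNormSq m (C a * g) = normSq a * truncNormSq m g := by
  simp [truncNormSq, mul_sum]

def linFactor (q : ℂ × ℂ) : ℂ[X] := C q.1 * X + C q.2

def linFactorRefl (q : ℂ × ℂ) : ℂ[X] := C (conj q.2) * X + C (conj q.1)

lemma coeff_linFactor_mul (q : ℂ × ℂ) (g : ℂ[X]) (t : ℕ) :
    (linFactor q * g).coeff t = q.1 * (X * g).coeff t + q.2 * g.coeff t := by
  simp [linFactor, add_mul, mul_assoc]

lemma coeff_linFactorRefl_mul (q : ℂ × ℂ) (g : ℂ[X]) (t : ℕ) :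
    (linFactorRefl q * g).coeff t = conj q.2 * (X * g).coeff t + conj q.1 * g.coeff t := by
  simp [linFactorRefl, add_mul, mul_assoc]

lemma normSq_mul_add_mul (u v x y : ℂ) :
    normSq (u * y + v * x) =
      normSq (conj v * y + conj u * x) + (normSq v - normSq u) * (normSq x - normSq y) := by
  simp only [normSq_apply, add_re, add_im, mul_re, mul_im, conj_re, conj_im]
  ring

lemma truncNormSq_linFactor_mul (m : ℕ) (q : ℂ × ℂ) (g : ℂ[X]) :
    truncNormSq (m + 1) (linFactor q * g) =
      truncNormSq (m + 1) (linFactorRefl q * g) +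
        (normSq q.2 - normSq q.1) * normSq (g.coeff m) := by
  have hX := truncNormSq_X_mul m g
  have hg := truncNormSq_succ m g
  simp only [truncNormSq] at hX hg ⊢
  have hterm (t : ℕ) : normSq ((linFactor q * g).coeff t) =
      normSq ((linFactorRefl q * g).coeff t) +
        (normSq q.2 - normSq q.1) * (normSq (g.coeff t) - normSq ((X * g).coeff t)) := by
    rw [coeff_linFactor_mul, coeff_linFactorRefl_mul, normSq_mul_add_mul]
  simp only [hterm, sum_add_distrib, ← mul_sum, sum_sub_distrib, hX, hg]
  ring

lemma coeff_eq_zero_of_coeff_linFactor_mul_eq_zero {q : ℂ × ℂ} (hq : normSq q.1 < normSq q.2)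
    {g : ℂ[X]} {t : ℕ} (ha : (linFactor q * g).coeff t = 0)
    (hb : (linFactorRefl q * g).coeff t = 0) :
    g.coeff t = 0 ∧ (X * g).coeff t = 0 := by
  rw [coeff_linFactor_mul] at ha
  rw [coeff_linFactorRefl_mul] at hb
  have hdet : (normSq q.2 - normSq q.1 : ℂ) ≠ 0 := by exact_mod_cast (sub_pos.2 hq).ne'
  have hXg : (X * g).coeff t = 0 := by
    have : (normSq q.2 - normSq q.1 : ℂ) * (X * g).coeff t = 0 := by
      rw [← mul_conj, ← mul_conj]
      linear_combination q.2 * hb - conj q.1 * ha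
    exact (mul_eq_zero.1 this).resolve_left hdet
  refine ⟨?_, hXg⟩
  have hv : q.2 ≠ 0 := normSq_pos.1 ((normSq_nonneg _).trans_lt hq)
  rw [hXg, mul_zero, zero_add] at ha
  exact (mul_eq_zero.1 ha).resolve_left hv

def linProd (M : Multiset (ℂ × ℂ)) : ℂ[X] := (M.map linFactor).prod

def linReflProd (M : Multiset (ℂ × ℂ)) : ℂ[X] := (M.map linFactorRefl).prod

@[simp] lemma linProd_cons (q : ℂ × ℂ) (M : Multiset (ℂ × ℂ)) :
    linProd (q ::ₘ M) = linFactor q * linProd M := by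
  simp [linProd]

@[simp] lemma linReflProd_cons (q : ℂ × ℂ) (M : Multiset (ℂ × ℂ)) :
    linReflProd (q ::ₘ M) = linFactorRefl q * linReflProd M := by
  simp [linReflProd]

lemma truncNormSq_linReflProd_mul_le (m : ℕ) {M : Multiset (ℂ × ℂ)}
    (hM : ∀ q ∈ M, normSq q.1 ≤ normSq q.2) (g : ℂ[X]) :
    truncNormSq (m + 1) (linReflProd M * g) ≤ truncNormSq (m + 1) (linProd M * g) := by
  induction M using Multiset.induction_on generalizing g with
  | empty => simp [linProd, linReflProd]
  | cons q M ih =>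
    have hq := hM q (Multiset.mem_cons_self q M)
    have ih' := ih (fun r hr => hM r (Multiset.mem_cons_of_mem hr)) (linFactor q * g)
    have hswap := truncNormSq_linFactor_mul m q (linReflProd M * g)
    have hdefect := mul_nonneg (sub_nonneg.2 hq) (normSq_nonneg ((linReflProd M * g).coeff m))
    calc truncNormSq (m + 1) (linReflProd (q ::ₘ M) * g)
        = truncNormSq (m + 1) (linFactorRefl q * (linReflProd M * g)) := by
          rw [linReflProd_cons, mul_assoc]
      _ ≤ truncNormSq (m + 1) (linFactor q * (linReflProd M * g)) := by linarith
      _ = truncNormSq (m + 1) (linReflProd M * (linFactor q * g)) := by ring_nf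
      _ ≤ truncNormSq (m + 1) (linProd M * (linFactor q * g)) := ih'
      _ = truncNormSq (m + 1) (linProd (q ::ₘ M) * g) := by rw [linProd_cons]; ring_nf

-- Compare the chains that swap `q` first and swap it last.
lemma truncNormSq_eq_of_truncNormSq_cons_eq (m : ℕ) {q : ℂ × ℂ} {M : Multiset (ℂ × ℂ)}
    (hq : normSq q.1 ≤ normSq q.2) (hM : ∀ r ∈ M, normSq r.1 ≤ normSq r.2) {g : ℂ[X]}
    (heq : truncNormSq (m + 1) (linReflProd (q ::ₘ M) * g) =
      truncNormSq (m + 1) (linProd (q ::ₘ M) * g)) :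
    truncNormSq (m + 1) (linReflProd M * (linFactor q * g)) =
        truncNormSq (m + 1) (linProd M * (linFactor q * g)) ∧
      truncNormSq (m + 1) (linReflProd M * (linFactorRefl q * g)) =
        truncNormSq (m + 1) (linProd M * (linFactorRefl q * g)) ∧
      (normSq q.2 - normSq q.1) * normSq ((linReflProd M * g).coeff m) = 0 := by
  simp only [linReflProd_cons, linProd_cons, mul_assoc] at heq
  set a := linFactor q
  set b := linFactorRefl q
  set A := linProd M
  set B := linReflProd M
  have hswapB := truncNormSq_linFactor_mul m q (B * g)
  have hswapA := truncNormSq_linFactor_mul m q (A * g)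
  have hdefA := mul_nonneg (sub_nonneg.2 hq) (normSq_nonneg ((A * g).coeff m))
  have hdefB := mul_nonneg (sub_nonneg.2 hq) (normSq_nonneg ((B * g).coeff m))
  have hleA := truncNormSq_linReflProd_mul_le m hM (a * g)
  have hleB := truncNormSq_linReflProd_mul_le m hM (b * g)
  rw [mul_left_comm B a g, mul_left_comm A a g] at hleA ⊢
  rw [mul_left_comm B b g, mul_left_comm A b g] at hleB ⊢
  refine ⟨?_, ?_, ?_⟩ <;> linarith

lemma coeff_eq_zero_of_truncNormSq_linReflProd_mul_eq (m : ℕ) {M : Multiset (ℂ × ℂ)}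
    (hM : ∀ q ∈ M, normSq q.1 < normSq q.2) {g : ℂ[X]}
    (heq : truncNormSq (m + 1) (linReflProd M * g) = truncNormSq (m + 1) (linProd M * g))
    {s : ℕ} (hs : m + 1 - Multiset.card M ≤ s) (hsm : s ≤ m) : g.coeff s = 0 := by
  induction M using Multiset.induction_on generalizing g s with
  | empty => simp only [Multiset.card_zero] at hs; omega
  | cons q M ih =>
    have hq := hM q (Multiset.mem_cons_self q M)
    have hM' : ∀ r ∈ M, normSq r.1 < normSq r.2 := fun r hr => hM r (Multiset.mem_cons_of_mem hr)
    obtain ⟨hEqA, hEqB, hdef⟩ :=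
      truncNormSq_eq_of_truncNormSq_cons_eq m hq.le (fun r hr => (hM' r hr).le) heq
    have hwindow {t : ℕ} (ht : m + 1 - Multiset.card M ≤ t) (htm : t ≤ m) :
        g.coeff t = 0 ∧ (X * g).coeff t = 0 :=
      coeff_eq_zero_of_coeff_linFactor_mul_eq_zero hq (ih hM' hEqA ht htm) (ih hM' hEqB ht htm)
    rw [Multiset.card_cons] at hs
    rcases le_or_gt (m + 1 - Multiset.card M) s with hs' | hs'
    · exact (hwindow hs' hsm).1
    · rcases Multiset.empty_or_exists_mem M with rfl | ⟨r, hr⟩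
      · obtain rfl : s = m := by simp only [Multiset.card_zero] at hs' hs; omega
        simpa [linReflProd, (sub_pos.2 hq).ne'] using hdef
      · have hcard : 0 < Multiset.card M := Multiset.card_pos_iff_exists_mem.2 ⟨r, hr⟩
        simpa [coeff_X_mul] using (hwindow (t := s + 1) (by omega) (by omega)).2

/-- The reciprocal polynomial `w ↦ w ^ N * conj (r (1 / w̄))`. -/
def starReflect (N : ℕ) (r : ℂ[X]) : ℂ[X] := (reflect N r).map (starRingEnd ℂ)

lemma natDegree_linFactor_le (q : ℂ × ℂ) : (linFactor q).natDegree ≤ 1 := natDegree_linear_le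

lemma natDegree_linProd_le (M : Multiset (ℂ × ℂ)) : (linProd M).natDegree ≤ Multiset.card M := by
  induction M using Multiset.induction_on with
  | empty => simp [linProd]
  | cons q M ih =>
    rw [linProd_cons, Multiset.card_cons, add_comm]
    exact natDegree_mul_le.trans (add_le_add (natDegree_linFactor_le q) ih)

lemma starReflect_linProd (M : Multiset (ℂ × ℂ)) :
    starReflect (Multiset.card M) (linProd M) = linReflProd M := by
  induction M using Multiset.induction_on with
  | empty => simp [starReflect, linProd, linReflProd]
  | cons q M ih =>
    rw [linProd_cons, linReflProd_cons, ← ih, Multiset.card_cons, add_comm, starReflect,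
      reflect_mul _ _ (natDegree_linFactor_le q) (natDegree_linProd_le M), Polynomial.map_mul]
    congr 1
    simp [linFactor, linFactorRefl, reflect_add, reflect_C_mul, reflect_C]
    ring

lemma one_lt_normSq_of_mem_roots {r : ℂ[X]} (hstab : ∀ w : ℂ, ‖w‖ ≤ 1 → r.eval w ≠ 0)
    {ζ : ℂ} (hζ : ζ ∈ r.roots) : 1 < normSq ζ := by
  have h1 : 1 < ‖ζ‖ := lt_of_not_ge fun h => hstab ζ h (isRoot_of_mem_roots hζ)
  rw [normSq_eq_norm_sq]
  nlinarith

lemma exists_linProd_eq_of_stable {m : ℕ} {r : ℂ[X]} (hr : r.natDegree ≤ m)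
    (hstab : ∀ w : ℂ, ‖w‖ ≤ 1 → r.eval w ≠ 0) :
    ∃ M : Multiset (ℂ × ℂ), Multiset.card M = m ∧ (∀ q ∈ M, normSq q.1 < normSq q.2) ∧
      r = C r.leadingCoeff * linProd M := by
  refine ⟨r.roots.map (fun ζ => (1, -ζ)) + Multiset.replicate (m - r.natDegree) (0, 1),
    ?_, ?_, ?_⟩
  · simp [IsAlgClosed.card_roots_eq_natDegree, hr]
  · simp only [Multiset.mem_add, Multiset.mem_map, Multiset.mem_replicate]
    rintro q (⟨ζ, hζ, rfl⟩ | ⟨-, rfl⟩)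
    · simpa using one_lt_normSq_of_mem_roots hstab hζ
    · simp
  · have hlin : linFactor (0, 1) = 1 := by simp [linFactor]
    simp only [linProd, Multiset.map_add, Multiset.prod_add, Multiset.map_replicate, hlin,
      Multiset.prod_replicate, one_pow, mul_one, Multiset.map_map, Function.comp_def]
    simp only [linFactor, map_one, one_mul, map_neg, ← sub_eq_add_neg]
    exact (C_leadingCoeff_mul_prod_multiset_X_sub_C IsAlgClosed.card_roots_eq_natDegree).symm

theorem truncNormSq_starReflect_mul_lt {m : ℕ} {r : ℂ[X]} (hr : r.natDegree ≤ m + 1)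
    (hstab : ∀ w : ℂ, ‖w‖ ≤ 1 → r.eval w ≠ 0) {f : ℂ[X]} (hf0 : f ≠ 0) (hf : f.natDegree ≤ m) :
    truncNormSq (m + 1) (starReflect (m + 1) r * f) < truncNormSq (m + 1) (r * f) := by
  obtain ⟨M, hcard, hM, hfac⟩ := exists_linProd_eq_of_stable hr hstab
  have ha : r.leadingCoeff ≠ 0 := leadingCoeff_ne_zero.2 fun h => hstab 0 (by simp) (by simp [h])
  set a := r.leadingCoeff
  have hrefl : starReflect (m + 1) r = C (conj a) * linReflProd M := by
    rw [← starReflect_linProd, hcard, starReflect, starReflect]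
    conv_lhs => rw [hfac]
    rw [reflect_C_mul, Polynomial.map_mul, map_C]
  have hlt : truncNormSq (m + 1) (linReflProd M * f) < truncNormSq (m + 1) (linProd M * f) := by
    refine (truncNormSq_linReflProd_mul_le m (fun q hq => (hM q hq).le) f).lt_of_ne
      fun heq => hf0 ?_
    ext s
    rcases le_or_gt s m with hs | hs
    · exact coeff_eq_zero_of_truncNormSq_linReflProd_mul_eq m hM heq (by omega) hs
    · exact coeff_eq_zero_of_natDegree_lt (by omega)
  rw [hrefl, hfac, mul_assoc, mul_assoc, truncNormSq_C_mul, truncNormSq_C_mul, normSq_conj]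
  exact mul_lt_mul_of_pos_left hlt (normSq_pos.2 ha)

section Toeplitz

variable {R : Type*} [CommSemiring R]

def upperToeplitz (m : ℕ) (g : R[X]) : Matrix (Fin m) (Fin m) R :=
  fun i j => if i ≤ j then g.coeff ((j : ℕ) - i) else 0

def revVecPoly {m : ℕ} (x : Fin m → R) : R[X] := ∑ i : Fin m, C (x (Fin.rev i)) * X ^ (i : ℕ)

lemma coeff_mul_revVecPoly {m : ℕ} (g : R[X]) (x : Fin m → R) (t : ℕ) :
    (g * revVecPoly x).coeff t =
      ∑ j : Fin m, if (Fin.rev j : ℕ) ≤ t then g.coeff (t - Fin.rev j) * x j else 0 := by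
  rw [revVecPoly, mul_sum, finsetSum_coeff, ← Equiv.sum_comp Fin.revPerm]
  refine sum_congr rfl fun j _ => ?_
  rw [mul_left_comm, coeff_C_mul, coeff_mul_X_pow']
  simp [Fin.revPerm, mul_comm]

lemma upperToeplitz_mulVec {m : ℕ} (g : R[X]) (x : Fin m → R) (i : Fin m) :
    (upperToeplitz m g *ᵥ x) i = (g * revVecPoly x).coeff (Fin.rev i) := by
  rw [coeff_mul_revVecPoly, mulVec, dotProduct]
  refine sum_congr rfl fun j _ => ?_
  have hj := j.isLt
  have hi := i.isLt
  simp only [upperToeplitz, Fin.val_rev, Fin.le_def]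
  by_cases hij : (i : ℕ) ≤ j
  · rw [if_pos hij, if_pos (by omega), show m - (i + 1) - (m - (j + 1)) = (j : ℕ) - i by omega]
  · rw [if_neg hij, if_neg (by omega), zero_mul]

lemma coeff_revVecPoly {m : ℕ} (x : Fin m → R) (i : Fin m) :
    (revVecPoly x).coeff i = x (Fin.rev i) := by
  simp [revVecPoly, finsetSum_coeff, Fin.val_inj]

lemma revVecPoly_ne_zero {m : ℕ} {x : Fin m → R} (hx : x ≠ 0) : revVecPoly x ≠ 0 := by
  intro h
  refine hx (funext fun i => ?_)
  simpa [h] using (coeff_revVecPoly x (Fin.rev i)).symm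

lemma natDegree_revVecPoly_lt {m : ℕ} {x : Fin m → R} (hx : x ≠ 0) :
    (revVecPoly x).natDegree < m :=
  (natDegree_lt_iff_degree_lt (revVecPoly_ne_zero hx)).2 (degree_sum_fin_lt _)

end Toeplitz

lemma star_dotProduct_self_eq_sum_normSq {ι : Type*} [Fintype ι] (y : ι → ℂ) :
    star y ⬝ᵥ y = ((∑ i, normSq (y i) : ℝ) : ℂ) := by
  simp [dotProduct, mul_comm, mul_conj]

lemma sum_normSq_upperToeplitz_mulVec {m : ℕ} (g : ℂ[X]) (x : Fin m → ℂ) :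
    ∑ i, normSq ((upperToeplitz m g *ᵥ x) i) = truncNormSq m (g * revVecPoly x) := by
  rw [truncNormSq, ← Fin.sum_univ_eq_sum_range, ← Equiv.sum_comp Fin.revPerm]
  simp [upperToeplitz_mulVec]

theorem posDef_schurCohn {m : ℕ} {r : ℂ[X]} (hr : r.natDegree ≤ m)
    (hstab : ∀ w : ℂ, ‖w‖ ≤ 1 → r.eval w ≠ 0) :
    ((upperToeplitz m r)ᴴ * upperToeplitz m r -
      (upperToeplitz m (starReflect m r))ᴴ * upperToeplitz m (starReflect m r)).PosDef := by
  refine posDef_iff_dotProduct_mulVec.2 ⟨(isHermitian_conjTranspose_mul_self _).sub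
    (isHermitian_conjTranspose_mul_self _), fun x hx => ?_⟩
  obtain ⟨k, rfl⟩ : ∃ k, m = k + 1 :=
    Nat.exists_eq_add_one.2 (Nat.pos_of_ne_zero fun h => hx (funext fun i => (h ▸ i).elim0))
  have hquad (A : Matrix (Fin (k + 1)) (Fin (k + 1)) ℂ) :
      star x ⬝ᵥ ((Aᴴ * A) *ᵥ x) = star (A *ᵥ x) ⬝ᵥ (A *ᵥ x) := by
    rw [← mulVec_mulVec, dotProduct_mulVec, star_mulVec]
  rw [sub_mulVec, dotProduct_sub, hquad, hquad, star_dotProduct_self_eq_sum_normSq,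
    star_dotProduct_self_eq_sum_normSq, sum_normSq_upperToeplitz_mulVec,
    sum_normSq_upperToeplitz_mulVec, ← ofReal_sub, zero_lt_real, sub_pos]
  exact truncNormSq_starReflect_mul_lt hr hstab (revVecPoly_ne_zero hx)
    (Nat.lt_succ_iff.1 (natDegree_revVecPoly_lt hx))

/-- The polynomial `w ↦ p(z, w) = ∑ₗ pₗ(z) wˡ`. -/
def slicePoly (n m : ℕ) (c : ℕ → ℕ → ℂ) (z : ℂ) : ℂ[X] :=
  ∑ l ∈ range (m + 1), C (pcoefZ n m c l z) * X ^ l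

section Slice

variable (n m : ℕ) (c : ℕ → ℕ → ℂ) (z : ℂ)

lemma coeff_slicePoly (l : ℕ) : (slicePoly n m c z).coeff l = pcoefZ n m c l z := by
  simp only [slicePoly, finsetSum_coeff, coeff_C_mul_X_pow, sum_ite_eq, mem_range]
  split_ifs with hl
  · rfl
  · rw [pcoefZ, if_neg (by omega)]

lemma natDegree_slicePoly_le : (slicePoly n m c z).natDegree ≤ m :=
  natDegree_le_iff_coeff_eq_zero.2 fun l hl => by
    rw [coeff_slicePoly, pcoefZ, if_neg (by omega)]

lemma eval_slicePoly (w : ℂ) : (slicePoly n m c z).eval w = evalP n m c z w := by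
  simp only [slicePoly, eval_finsetSum, eval_mul, eval_C, eval_pow, eval_X, evalP, pcoefZ]
  rw [sum_comm]
  refine sum_congr rfl fun l hl => ?_
  rw [if_pos (by rw [mem_range] at hl; omega), sum_mul]
  simp

lemma T1mat_eq :
    T1mat n m c z = (upperToeplitz m ((slicePoly n m c z).map (starRingEnd ℂ)))ᴴ := by
  ext i j
  simp only [T1mat, upperToeplitz, conjTranspose_apply, coeff_map, coeff_slicePoly, Fin.le_def]
  split_ifs <;> simp [*]

lemma T2mat_eq : T2mat n m c z = upperToeplitz m (reflect m (slicePoly n m c z)) := by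
  ext i j
  simp only [T2mat, upperToeplitz, coeff_reflect, coeff_slicePoly, Fin.le_def]
  split_ifs with h
  · rw [revAt_le (by omega)]
    congr 1
    omega
  · rfl

end Slice

lemma starReflect_map_conj (N : ℕ) (q : ℂ[X]) :
    starReflect N (q.map (starRingEnd ℂ)) = reflect N q := by
  simp [starReflect, reflect_map, Polynomial.map_map]

lemma eval_map_conj (q : ℂ[X]) (w : ℂ) :
    (q.map (starRingEnd ℂ)).eval w = conj (q.eval (conj w)) := by
  rw [eval_map, ← eval₂_at_apply, conj_conj]

end

theorem statement19_general (n m : ℕ) (c : ℕ → ℕ → ℂ)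
    (hstable : Stable n m c) :
    ∀ z : ℂ, ‖z‖ = 1 →
      (T1mat n m c z * (T1mat n m c z)ᴴ - (T2mat n m c z)ᴴ * T2mat n m c z).PosDef := by
  intro z hz
  have hstab (w : ℂ) (hw : ‖w‖ ≤ 1) : ((slicePoly n m c z).map (starRingEnd ℂ)).eval w ≠ 0 := by
    rw [eval_map_conj, eval_slicePoly, _root_.map_ne_zero]
    exact hstable z (conj w) hz.le (by rwa [norm_conj])
  rw [T1mat_eq, T2mat_eq, conjTranspose_conjTranspose, ← starReflect_map_conj]
  exact posDef_schurCohn (natDegree_map_le.trans (natDegree_slicePoly_le n m c z)) hstab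

/-- Schur–Cohn test: if p is stable of degree (n,m), then for every z
on the unit circle the m×m matrix T_m(z) = T₁(z)T₁(z)* − T₂(z)*T₂(z) is positive
definite. -/
theorem statement19 (n m : ℕ) (c : ℕ → ℕ → ℂ)
    (hstable : Stable n m c) (hdeg : DegreeNM n m c) :
    ∀ z : ℂ, ‖z‖ = 1 →
      (T1mat n m c z * (T1mat n m c z)ᴴ - (T2mat n m c z)ᴴ * T2mat n m c z).PosDef :=
  statement19_general n m c hstable
end
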